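/- arXiv:1412.1150 — 12 statements merged into one kernel-verified Lean document; each statement's English description precedes it below -/
import Mathlib

section
/- If (μ,x) is an eigenpair of the 1-Laplacian Δ₁(G) with μ ≠ 0, then |δ⁺(x) − δ⁻(x)| ≤ δ⁰(x); in particular x ∈ π. -/
open Finset

/-- The set-valued sign function: {1} for t>0, {-1} for t<0, [-1,1] for t=0. -/
def SgnSet (t : ℝ) : Set ℝ :=
  if 0 < t then {1} else if t < 0 then {-1} else Set.Icc (-1) 1

/-- The energy `I(x) = ∑_{{i,j}∈E} |x_i − x_j|`, each edge counted once. -/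
noncomputable def energy {n : ℕ} (G : SimpleGraph (Fin n)) [DecidableRel G.Adj]
    (x : Fin n → ℝ) : ℝ :=
  (1 / 2) * ∑ i, ∑ j ∈ G.neighborFinset i, |x i - x j|

/-- `(μ, x)` is an eigenpair of the 1-Laplacian of `G`: `x ∈ X` and there are
`z_{ij} ∈ Sgn(x_i − x_j)` with `z_{ji} = −z_{ij}` and `∑_{j∼i} z_{ij} ∈ μ d_i Sgn(x_i)`. -/
def IsEigenpair {n : ℕ} (G : SimpleGraph (Fin n)) [DecidableRel G.Adj]
    (μ : ℝ) (x : Fin n → ℝ) : Prop :=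
  (∑ i, (G.degree i : ℝ) * |x i| = 1) ∧
  ∃ z : Fin n → Fin n → ℝ,
    (∀ i j, G.Adj i j → z i j ∈ SgnSet (x i - x j)) ∧
    (∀ i j, G.Adj i j → z j i = - z i j) ∧
    (∀ i, ∃ s ∈ SgnSet (x i),
      ∑ j ∈ G.neighborFinset i, z i j = μ * (G.degree i : ℝ) * s)

/-- `δ⁺(x) = ∑_{i : x_i > 0} d_i`. -/
noncomputable def deltaPlus {n : ℕ} (G : SimpleGraph (Fin n)) [DecidableRel G.Adj]
    (x : Fin n → ℝ) : ℝ :=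
  ∑ i ∈ univ.filter (fun i => 0 < x i), (G.degree i : ℝ)

/-- `δ⁻(x) = ∑_{i : x_i < 0} d_i`. -/
noncomputable def deltaMinus {n : ℕ} (G : SimpleGraph (Fin n)) [DecidableRel G.Adj]
    (x : Fin n → ℝ) : ℝ :=
  ∑ i ∈ univ.filter (fun i => x i < 0), (G.degree i : ℝ)

/-- `δ⁰(x) = ∑_{i : x_i = 0} d_i`. -/
noncomputable def deltaZero {n : ℕ} (G : SimpleGraph (Fin n)) [DecidableRel G.Adj]
    (x : Fin n → ℝ) : ℝ :=
  ∑ i ∈ univ.filter (fun i => x i = 0), (G.degree i : ℝ)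

/-- `π = {x ∈ X : |δ⁺(x) − δ⁻(x)| ≤ δ⁰(x)}`. -/
def piSet {n : ℕ} (G : SimpleGraph (Fin n)) [DecidableRel G.Adj] : Set (Fin n → ℝ) :=
  {x | (∑ i, (G.degree i : ℝ) * |x i| = 1) ∧
    |deltaPlus G x - deltaMinus G x| ≤ deltaZero G x}

/-- The Cheeger constant `h(G) = min_{∅ ≠ S ⊊ V} |E(S, S̄)| / min(vol S, vol S̄)`. -/
noncomputable def cheeger {n : ℕ} (G : SimpleGraph (Fin n)) [DecidableRel G.Adj] : ℝ :=
  sInf { r : ℝ | ∃ S : Finset (Fin n), S.Nonempty ∧ S ≠ univ ∧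
    r = ((univ.filter (fun p : Fin n × Fin n => G.Adj p.1 p.2 ∧ p.1 ∈ S ∧ p.2 ∉ S)).card : ℝ) /
      min (∑ i ∈ S, (G.degree i : ℝ)) (∑ i ∈ Sᶜ, (G.degree i : ℝ)) }

/-- Theorem 2.6 / Theorem 3.12: an eigenpair with `μ ≠ 0` satisfies
`|δ⁺(x) − δ⁻(x)| ≤ δ⁰(x)`; in particular `x ∈ π`. -/
theorem eigenvector_mem_piSet {n : ℕ} (G : SimpleGraph (Fin n)) [DecidableRel G.Adj]
    (μ : ℝ) (x : Fin n → ℝ) (h : IsEigenpair G μ x) (hμ : μ ≠ 0) :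
    |deltaPlus G x - deltaMinus G x| ≤ deltaZero G x ∧ x ∈ piSet G := by
  obtain ⟨hX, z, hz1, hz2, hz3⟩ := h
  choose s hs hsum using hz3
  -- sign values of s
  have hs_pos : ∀ i, 0 < x i → s i = 1 := by
    intro i hi
    have := hs i
    rw [SgnSet, if_pos hi] at this
    simpa using this
  have hs_neg : ∀ i, x i < 0 → s i = -1 := by
    intro i hi
    have := hs i
    rw [SgnSet, if_neg (by linarith), if_pos hi] at this
    simpa using this
  have hs_abs : ∀ i, |s i| ≤ 1 := by
    intro i
    rcases lt_trichotomy (x i) 0 with hi | hi | hi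
    · rw [hs_neg i hi]; simp
    · have := hs i
      rw [SgnSet, if_neg (by linarith), if_neg (by linarith)] at this
      exact abs_le.mpr this
    · rw [hs_pos i hi]; simp
  -- the antisymmetric sum vanishes
  have key : ∑ i, ∑ j ∈ G.neighborFinset i, z i j = 0 := by
    have h1 : ∀ i j : Fin n, (if G.Adj i j then z i j else 0)
        = - (if G.Adj j i then z j i else 0) := by
      intro i j
      by_cases hij : G.Adj i j
      · rw [if_pos hij, if_pos hij.symm, hz2 i j hij, neg_neg]
      · rw [if_neg hij, if_neg (fun h' => hij h'.symm), neg_zero]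
    have h2 : ∑ i, ∑ j ∈ G.neighborFinset i, z i j
        = ∑ i, ∑ j, if G.Adj i j then z i j else 0 := by
      apply Finset.sum_congr rfl
      intro i _
      rw [SimpleGraph.neighborFinset_eq_filter, Finset.sum_filter]
    have h3 : ∑ i, ∑ j, (if G.Adj i j then z i j else 0)
        = - ∑ i, ∑ j, (if G.Adj i j then z i j else 0) := by
      conv_lhs => rw [Finset.sum_comm]
      rw [← Finset.sum_neg_distrib]
      apply Finset.sum_congr rfl
      intro i _
      rw [← Finset.sum_neg_distrib]
      apply Finset.sum_congr rfl
      intro j _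
      exact h1 j i
    rw [h2]
    linarith [h3]
  -- hence ∑ d_i s_i = 0
  have key2 : ∑ i, (G.degree i : ℝ) * s i = 0 := by
    have : μ * ∑ i, (G.degree i : ℝ) * s i = 0 := by
      rw [Finset.mul_sum]
      rw [← key]
      apply Finset.sum_congr rfl
      intro i _
      rw [hsum i]; ring
    rcases mul_eq_zero.mp this with h' | h'
    · exact absurd h' hμ
    · exact h'
  -- split the sum into three parts
  set f : Fin n → ℝ := fun i => (G.degree i : ℝ) * s i with hf
  have hsplit : ∑ i, f i = (∑ i ∈ univ.filter (fun i => 0 < x i), f i)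
      + (∑ i ∈ univ.filter (fun i => x i < 0), f i)
      + (∑ i ∈ univ.filter (fun i => x i = 0), f i) := by
    rw [← Finset.sum_filter_add_sum_filter_not univ (fun i => 0 < x i) f, add_assoc]
    congr 1
    rw [← Finset.sum_filter_add_sum_filter_not (univ.filter (fun i => ¬ 0 < x i))
      (fun i => x i < 0) f]
    congr 1
    · apply Finset.sum_congr _ (fun _ _ => rfl)
      rw [Finset.filter_filter]
      apply Finset.filter_congr
      intro i _
      constructor
      · exact fun hh => hh.2
      · intro hh; exact ⟨by linarith, hh⟩
    · apply Finset.sum_congr _ (fun _ _ => rfl)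
      rw [Finset.filter_filter]
      apply Finset.filter_congr
      intro i _
      constructor
      · intro hh; push_neg at hh; linarith [hh.1, hh.2]
      · intro hh; constructor <;> simp [hh]
  have hA : ∑ i ∈ univ.filter (fun i => 0 < x i), f i = deltaPlus G x := by
    apply Finset.sum_congr rfl
    intro i hi
    simp only [Finset.mem_filter] at hi
    rw [hf]; simp [hs_pos i hi.2]
  have hB : ∑ i ∈ univ.filter (fun i => x i < 0), f i = - deltaMinus G x := by
    rw [deltaMinus, ← Finset.sum_neg_distrib]
    apply Finset.sum_congr rfl
    intro i hi
    simp only [Finset.mem_filter] at hi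
    rw [hf]; simp [hs_neg i hi.2]
  have hC : |∑ i ∈ univ.filter (fun i => x i = 0), f i| ≤ deltaZero G x := by
    refine le_trans (Finset.abs_sum_le_sum_abs _ _) ?_
    rw [deltaZero]
    apply Finset.sum_le_sum
    intro i _
    rw [hf, abs_mul, abs_of_nonneg (by positivity : (0:ℝ) ≤ (G.degree i : ℝ))]
    calc (G.degree i : ℝ) * |s i| ≤ (G.degree i : ℝ) * 1 :=
          mul_le_mul_of_nonneg_left (hs_abs i) (by positivity)
      _ = _ := mul_one _
  have hmain : |deltaPlus G x - deltaMinus G x| ≤ deltaZero G x := by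
    have : deltaPlus G x - deltaMinus G x
        = - ∑ i ∈ univ.filter (fun i => x i = 0), f i := by
      have := hsplit
      rw [key2, hA, hB] at this
      linarith
    rw [this, abs_neg]
    exact hC
  exact ⟨hmain, hX, hmain⟩
end

section
/- Every eigenvalue μ of the 1-Laplacian Δ₁(G) satisfies 0 ≤ μ ≤ 1. -/
open Finset


lemma swap_nbr_sum {n : ℕ} (G : SimpleGraph (Fin n)) [DecidableRel G.Adj]
    (f : Fin n → Fin n → ℝ) :
    ∑ i, ∑ j ∈ G.neighborFinset i, f i j = ∑ j, ∑ i ∈ G.neighborFinset j, f i j := by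
  simp only [SimpleGraph.neighborFinset_eq_filter, Finset.sum_filter]
  rw [Finset.sum_comm]
  refine Finset.sum_congr rfl fun j _ => Finset.sum_congr rfl fun i _ => ?_
  simp [G.adj_comm]

lemma sgn_mul {t s : ℝ} (hs : s ∈ SgnSet t) : s * t = |t| := by
  unfold SgnSet at hs
  rcases lt_trichotomy t 0 with h' | h' | h'
  · rw [if_neg (by linarith), if_pos h'] at hs
    simp only [Set.mem_singleton_iff] at hs
    rw [hs, abs_of_neg h']; ring
  · rw [h']; simp
  · rw [if_pos h'] at hs
    simp only [Set.mem_singleton_iff] at hs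
    rw [hs, abs_of_pos h']; ring



/-- Theorem 2.8: every eigenvalue `μ` of `Δ₁(G)` satisfies `0 ≤ μ ≤ 1`. -/
theorem eigenvalue_mem_unitInterval {n : ℕ} (G : SimpleGraph (Fin n)) [DecidableRel G.Adj]
    (μ : ℝ) (x : Fin n → ℝ) (h : IsEigenpair G μ x) :
    0 ≤ μ ∧ μ ≤ 1 := by
  obtain ⟨hx, z, hz1, hz2, hz3⟩ := h
  set S1 : ℝ := ∑ i, ∑ j ∈ G.neighborFinset i, z i j * x i with hS1def
  have hmu : S1 = μ := by
    have key : ∀ i, ∑ j ∈ G.neighborFinset i, z i j * x i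
        = μ * ((G.degree i : ℝ) * |x i|) := by
      intro i
      obtain ⟨s, hs, hsum⟩ := hz3 i
      rw [← Finset.sum_mul, hsum]
      have := sgn_mul hs
      linear_combination μ * (G.degree i : ℝ) * this
    rw [hS1def]
    simp only [key]
    rw [← Finset.mul_sum, hx, mul_one]
  have hS2 : ∑ i, ∑ j ∈ G.neighborFinset i, z i j * x j = - S1 := by
    rw [swap_nbr_sum]
    rw [hS1def, ← Finset.sum_neg_distrib]
    refine Finset.sum_congr rfl fun a _ => ?_
    rw [← Finset.sum_neg_distrib]
    refine Finset.sum_congr rfl fun b hb => ?_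
    rw [SimpleGraph.mem_neighborFinset] at hb
    rw [hz2 a b hb]; ring
  have hD : ∑ i, ∑ j ∈ G.neighborFinset i, |x i - x j| = 2 * μ := by
    have : ∑ i, ∑ j ∈ G.neighborFinset i, |x i - x j|
        = ∑ i, ∑ j ∈ G.neighborFinset i, (z i j * x i - z i j * x j) := by
      refine Finset.sum_congr rfl fun i _ => Finset.sum_congr rfl fun j hj => ?_
      rw [SimpleGraph.mem_neighborFinset] at hj
      have := sgn_mul ((hz1 i j hj))
      have habs : z i j * (x i - x j) = |x i - x j| := by
        have h2 := hz1 i j hj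
        unfold SgnSet at h2
        rcases lt_trichotomy (x i - x j) 0 with h' | h' | h'
        · rw [if_neg (by linarith), if_pos h'] at h2
          simp only [Set.mem_singleton_iff] at h2
          rw [h2, abs_of_neg h']; ring
        · rw [h']; simp [sub_eq_zero.mp h']
        · rw [if_pos h'] at h2
          simp only [Set.mem_singleton_iff] at h2
          rw [h2, abs_of_pos h']; ring
      rw [← habs]; ring
    rw [this]
    simp only [Finset.sum_sub_distrib]
    rw [← hS1def, hS2, hmu]; ring
  have hnonneg : (0:ℝ) ≤ ∑ i, ∑ j ∈ G.neighborFinset i, |x i - x j| :=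
    Finset.sum_nonneg fun i _ => Finset.sum_nonneg fun j _ => abs_nonneg _
  have hupper : ∑ i, ∑ j ∈ G.neighborFinset i, |x i - x j| ≤ 2 := by
    have step1 : ∑ i, ∑ j ∈ G.neighborFinset i, |x i - x j|
        ≤ ∑ i, ∑ j ∈ G.neighborFinset i, (|x i| + |x j|) := by
      refine Finset.sum_le_sum fun i _ => Finset.sum_le_sum fun j _ => abs_sub _ _
    have step2 : ∑ i, ∑ j ∈ G.neighborFinset i, |x i|
        = ∑ i, (G.degree i : ℝ) * |x i| := by
      refine Finset.sum_congr rfl fun i _ => ?_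
      rw [Finset.sum_const, G.card_neighborFinset_eq_degree, nsmul_eq_mul]
    have step3 : ∑ i, ∑ j ∈ G.neighborFinset i, |x j|
        = ∑ i, (G.degree i : ℝ) * |x i| := by
      rw [swap_nbr_sum]
      refine Finset.sum_congr rfl fun i _ => ?_
      rw [Finset.sum_const, G.card_neighborFinset_eq_degree, nsmul_eq_mul]
    calc ∑ i, ∑ j ∈ G.neighborFinset i, |x i - x j|
        ≤ ∑ i, ∑ j ∈ G.neighborFinset i, (|x i| + |x j|) := step1
      _ = (∑ i, ∑ j ∈ G.neighborFinset i, |x i|)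
          + ∑ i, ∑ j ∈ G.neighborFinset i, |x j| := by
          simp [Finset.sum_add_distrib]
      _ = 2 := by rw [step2, step3, hx]; ring
  constructor
  · nlinarith [hD, hnonneg]
  · nlinarith [hD, hupper]
end

section
/- Let x be an eigenvector of Δ₁(G) with eigenvalue μ which is constant on each of its nodal domains and zero elsewhere, i.e., x = ∑_{α=1}^{r⁺} y_α⁺ 1_{D_α⁺} − ∑_{β=1}^{r⁻} y_β⁻ 1_{D_β⁻} with all y_α⁺, y_β⁻ > 0, where D_1⁺,…,D_{r⁺}⁺ and D_1⁻,…,D_{r⁻}⁻ are the positive and negative nodal domains of x and 1_D denotes the indicator vector of D. Then for all nonnegative reals ỹ_1⁺,…,ỹ_{r⁺}⁺, ỹ_1⁻,…,ỹ_{r⁻}⁻ with ∑_{α} ỹ_α⁺ vol(D_α⁺) + ∑_{β} ỹ_β⁻ vol(D_β⁻) = 1, the vector ψ = ∑_{α} ỹ_α⁺ 1_{D_α⁺} − ∑_{β} ỹ_β⁻ 1_{D_β⁻} is an eigenvector of Δ₁(G) with the same eigenvalue μ. -/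
open Finset

/-- Theorem 3.7: if the eigenvector `x` is constant on each of its nodal
domains (the connected components of the subgraphs induced on `{i : x_i > 0}` and
`{i : x_i < 0}`), then every vector `ψ` obtained by assigning arbitrary nonnegative constants
`ỹ` to the positive nodal domains and `−ỹ` to the negative ones, normalized so that
`∑_α ỹ_α⁺ vol(D_α⁺) + ∑_β ỹ_β⁻ vol(D_β⁻) = 1`, is an eigenvector with the same eigenvalue. -/
theorem cell_of_eigenvectors {n : ℕ} (G : SimpleGraph (Fin n)) [DecidableRel G.Adj]
    (μ : ℝ) (x : Fin n → ℝ) (hx : IsEigenpair G μ x)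
    (hconstP : ∀ i j : {v : Fin n | 0 < x v},
      (G.induce {v : Fin n | 0 < x v}).connectedComponentMk i =
        (G.induce {v : Fin n | 0 < x v}).connectedComponentMk j → x i = x j)
    (hconstM : ∀ i j : {v : Fin n | x v < 0},
      (G.induce {v : Fin n | x v < 0}).connectedComponentMk i =
        (G.induce {v : Fin n | x v < 0}).connectedComponentMk j → x i = x j)
    (yp : (G.induce {v : Fin n | 0 < x v}).ConnectedComponent → ℝ)
    (ym : (G.induce {v : Fin n | x v < 0}).ConnectedComponent → ℝ)
    (hyp : ∀ c, 0 ≤ yp c) (hym : ∀ c, 0 ≤ ym c)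
    (hvol : ∑ i, (if h : 0 < x i then
        (G.degree i : ℝ) * yp ((G.induce {v : Fin n | 0 < x v}).connectedComponentMk ⟨i, h⟩)
      else if h' : x i < 0 then
        (G.degree i : ℝ) * ym ((G.induce {v : Fin n | x v < 0}).connectedComponentMk ⟨i, h'⟩)
      else 0) = 1)
    (ψ : Fin n → ℝ)
    (hψ : ∀ i, ψ i = if h : 0 < x i then
        yp ((G.induce {v : Fin n | 0 < x v}).connectedComponentMk ⟨i, h⟩)
      else if h' : x i < 0 then
        -(ym ((G.induce {v : Fin n | x v < 0}).connectedComponentMk ⟨i, h'⟩))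
      else 0) :
    IsEigenpair G μ ψ := by
  classical
  obtain ⟨hnorm, z, hz1, hz2, hz3⟩ := hx
  -- basic sign facts about ψ
  have hpsi_nonneg : ∀ i, ¬ x i < 0 → 0 ≤ ψ i := by
    intro i hi
    rw [hψ i]
    by_cases h : 0 < x i
    · rw [dif_pos h]; exact hyp _
    · rw [dif_neg h, dif_neg hi]
  have hpsi_nonpos : ∀ i, ¬ 0 < x i → ψ i ≤ 0 := by
    intro i hi
    rw [hψ i, dif_neg hi]
    by_cases h' : x i < 0
    · rw [dif_pos h']; simpa using hym _
    · rw [dif_neg h']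
  have hpsi_zero : ∀ i, x i = 0 → ψ i = 0 := by
    intro i hi
    rw [hψ i, dif_neg (by rw [hi]; exact lt_irrefl 0 : ¬ 0 < x i),
      dif_neg (by rw [hi]; exact lt_irrefl 0 : ¬ x i < 0)]
  -- adjacent vertices both positive ⇒ same ψ value
  have hEqP : ∀ i j, G.Adj i j → ∀ (hi : 0 < x i) (hj : 0 < x j), ψ i = ψ j := by
    intro i j hadj hi hj
    have hcc : (G.induce {v : Fin n | 0 < x v}).connectedComponentMk ⟨i, hi⟩ =
        (G.induce {v : Fin n | 0 < x v}).connectedComponentMk ⟨j, hj⟩ :=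
      SimpleGraph.ConnectedComponent.sound
        (SimpleGraph.Adj.reachable (by simp [hadj]))
    rw [hψ i, hψ j, dif_pos hi, dif_pos hj, hcc]
  have hEqM : ∀ i j, G.Adj i j → ∀ (hi : x i < 0) (hj : x j < 0), ψ i = ψ j := by
    intro i j hadj hi hj
    have hcc : (G.induce {v : Fin n | x v < 0}).connectedComponentMk ⟨i, hi⟩ =
        (G.induce {v : Fin n | x v < 0}).connectedComponentMk ⟨j, hj⟩ :=
      SimpleGraph.ConnectedComponent.sound
        (SimpleGraph.Adj.reachable (by simp [hadj]))
    have hni : ¬ 0 < x i := not_lt.2 hi.le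
    have hnj : ¬ 0 < x j := not_lt.2 hj.le
    rw [hψ i, hψ j, dif_neg hni, dif_neg hnj, dif_pos hi, dif_pos hj, hcc]
  -- sign transfer
  have key : ∀ i j, G.Adj i j → 0 < ψ i - ψ j → 0 < x i - x j := by
    intro i j hadj h
    rcases lt_trichotomy (x i) 0 with hi | hi | hi
    · rcases lt_trichotomy (x j) 0 with hj | hj | hj
      · rw [hEqM i j hadj hi hj] at h; linarith
      · have h1 := hpsi_nonpos i (not_lt.2 hi.le)
        have h2 := hpsi_zero j hj
        linarith
      · have h1 := hpsi_nonpos i (not_lt.2 hi.le)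
        have h2 := hpsi_nonneg j (not_lt.2 hj.le)
        linarith
    · rcases lt_trichotomy (x j) 0 with hj | hj | hj
      · linarith
      · have h1 := hpsi_zero i hi
        have h2 := hpsi_zero j hj
        linarith
      · have h1 := hpsi_zero i hi
        have h2 := hpsi_nonneg j (not_lt.2 hj.le)
        linarith
    · rcases lt_trichotomy (x j) 0 with hj | hj | hj
      · linarith
      · linarith
      · rw [hEqP i j hadj hi hj] at h; linarith
  have hSub : ∀ t : ℝ, SgnSet t ⊆ Set.Icc (-1 : ℝ) 1 := by
    intro t
    unfold SgnSet
    split_ifs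
    · intro a ha; simp at ha; subst ha; constructor <;> norm_num
    · intro a ha; simp at ha; subst ha; constructor <;> norm_num
    · exact le_refl _
  have hOne : ∀ t : ℝ, 0 ≤ t → (1 : ℝ) ∈ SgnSet t := by
    intro t ht
    unfold SgnSet
    split_ifs with h1 h2
    · rfl
    · linarith
    · constructor <;> norm_num
  have hNegOne : ∀ t : ℝ, t ≤ 0 → (-1 : ℝ) ∈ SgnSet t := by
    intro t ht
    unfold SgnSet
    split_ifs with h1 h2
    · linarith
    · rfl
    · constructor <;> norm_num
  refine ⟨?_, z, ?_, hz2, ?_⟩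
  · -- normalization
    rw [← hvol]
    apply Finset.sum_congr rfl
    intro i _
    rw [hψ i]
    split_ifs with h h'
    · rw [abs_of_nonneg (hyp _)]
    · rw [abs_neg, abs_of_nonneg (hym _)]
    · simp
  · -- z in SgnSet of ψ differences
    intro i j hadj
    have hzij := hz1 i j hadj
    rcases lt_trichotomy (ψ i - ψ j) 0 with h | h | h
    · have hx' : x i - x j < 0 := by
        have := key j i hadj.symm (by linarith)
        linarith
      have h1 : SgnSet (ψ i - ψ j) = {-1} := by unfold SgnSet; rw [if_neg (by linarith), if_pos h]
      have h2 : SgnSet (x i - x j) = {-1} := by unfold SgnSet; rw [if_neg (by linarith), if_pos hx']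
      rw [h1]; rw [h2] at hzij; exact hzij
    · rw [h]
      unfold SgnSet
      rw [if_neg (lt_irrefl 0), if_neg (lt_irrefl 0)]
      exact hSub _ hzij
    · have hx' : 0 < x i - x j := key i j hadj h
      have h1 : SgnSet (ψ i - ψ j) = {1} := by unfold SgnSet; rw [if_pos h]
      have h2 : SgnSet (x i - x j) = {1} := by unfold SgnSet; rw [if_pos hx']
      rw [h1]; rw [h2] at hzij; exact hzij
  · -- vertex condition
    intro i
    obtain ⟨s, hs, hsum⟩ := hz3 i
    refine ⟨s, ?_, hsum⟩
    rcases lt_trichotomy (x i) 0 with hi | hi | hi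
    · have : SgnSet (x i) = {-1} := by unfold SgnSet; rw [if_neg (by linarith), if_pos hi]
      rw [this] at hs
      simp only [Set.mem_singleton_iff] at hs
      subst hs
      exact hNegOne _ (hpsi_nonpos i (not_lt.2 hi.le))
    · rw [hpsi_zero i hi]
      rw [hi] at hs
      exact hs
    · have : SgnSet (x i) = {1} := by unfold SgnSet; rw [if_pos hi]
      rw [this] at hs
      simp only [Set.mem_singleton_iff] at hs
      subst hs
      exact hOne _ (hpsi_nonneg i (not_lt.2 hi.le))
end

section
/- If x is an eigenvector of Δ₁(G) with eigenvalue μ, then the normalized vector x̂ defined by x̂_i = sgn(x_i)/δ, where δ = ∑_{i: x_i ≠ 0} d_i, is also an eigenvector of Δ₁(G) with eigenvalue μ. -/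
open Finset

lemma sgnset_of_pos {t : ℝ} (ht : 0 < t) : SgnSet t = {1} := if_pos ht

lemma sgnset_of_neg {t : ℝ} (ht : t < 0) : SgnSet t = {-1} := by
  unfold SgnSet; rw [if_neg (by linarith), if_pos ht]

lemma sgnset_of_zero {t : ℝ} (ht : t = 0) : SgnSet t = Set.Icc (-1) 1 := by
  unfold SgnSet; rw [if_neg (by simp [ht]), if_neg (by simp [ht])]

lemma sgnset_subset_Icc (t c : ℝ) (h : c ∈ SgnSet t) : c ∈ Set.Icc (-1:ℝ) 1 := by
  rcases lt_trichotomy t 0 with ht|ht|ht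
  · rw [sgnset_of_neg ht] at h; simp_all
  · rw [sgnset_of_zero ht] at h; exact h
  · rw [sgnset_of_pos ht] at h; simp_all

lemma sgnset_div (δ : ℝ) (hδ : 0 < δ) (t : ℝ) : SgnSet (t / δ) = SgnSet t := by
  rcases lt_trichotomy t 0 with ht|ht|ht
  · rw [sgnset_of_neg ht, sgnset_of_neg (div_neg_of_neg_of_pos ht hδ)]
  · rw [sgnset_of_zero ht, sgnset_of_zero (by simp [ht])]
  · rw [sgnset_of_pos ht, sgnset_of_pos (div_pos ht hδ)]

lemma sgnset_sign_sub (a b c : ℝ) (h : c ∈ SgnSet (a - b)) :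
    c ∈ SgnSet (Real.sign a - Real.sign b) := by
  have h1 := sgnset_subset_Icc _ _ h
  rcases lt_trichotomy a 0 with ha|ha|ha <;> rcases lt_trichotomy b 0 with hb|hb|hb
  · rw [Real.sign_of_neg ha, Real.sign_of_neg hb, sgnset_of_zero (by norm_num)]; exact h1
  · rw [Real.sign_of_neg ha, hb, Real.sign_zero, sgnset_of_neg (by norm_num)]
    rwa [sgnset_of_neg (by linarith : a - b < 0)] at h
  · rw [Real.sign_of_neg ha, Real.sign_of_pos hb, sgnset_of_neg (by norm_num)]
    rwa [sgnset_of_neg (by linarith : a - b < 0)] at h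
  · rw [ha, Real.sign_zero, Real.sign_of_neg hb, sgnset_of_pos (by norm_num)]
    rwa [sgnset_of_pos (by linarith : 0 < a - b)] at h
  · rw [ha, Real.sign_zero, hb, Real.sign_zero, sgnset_of_zero (by norm_num)]; exact h1
  · rw [ha, Real.sign_zero, Real.sign_of_pos hb, sgnset_of_neg (by norm_num)]
    rwa [sgnset_of_neg (by linarith : a - b < 0)] at h
  · rw [Real.sign_of_pos ha, Real.sign_of_neg hb, sgnset_of_pos (by norm_num)]
    rwa [sgnset_of_pos (by linarith : 0 < a - b)] at h
  · rw [Real.sign_of_pos ha, hb, Real.sign_zero, sgnset_of_pos (by norm_num)]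
    rwa [sgnset_of_pos (by linarith : 0 < a - b)] at h
  · rw [Real.sign_of_pos ha, Real.sign_of_pos hb, sgnset_of_zero (by norm_num)]; exact h1

lemma sgnset_sign (δ : ℝ) (hδ : 0 < δ) (a : ℝ) :
    SgnSet (Real.sign a / δ) = SgnSet a := by
  rw [sgnset_div δ hδ]
  rcases lt_trichotomy a 0 with ha|ha|ha
  · rw [Real.sign_of_neg ha, sgnset_of_neg (by norm_num), sgnset_of_neg ha]
  · rw [ha, Real.sign_zero]
  · rw [Real.sign_of_pos ha, sgnset_of_pos (by norm_num), sgnset_of_pos ha]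

theorem normalized_eigenvector' {n : ℕ} (G : SimpleGraph (Fin n)) [DecidableRel G.Adj]
    (μ : ℝ) (x : Fin n → ℝ)
    (h : (∑ i, (G.degree i : ℝ) * |x i| = 1) ∧
      ∃ z : Fin n → Fin n → ℝ,
        (∀ i j, G.Adj i j → z i j ∈ SgnSet (x i - x j)) ∧
        (∀ i j, G.Adj i j → z j i = - z i j) ∧
        (∀ i, ∃ s ∈ SgnSet (x i),
          ∑ j ∈ G.neighborFinset i, z i j = μ * (G.degree i : ℝ) * s)) :
    (∑ i, (G.degree i : ℝ) * |(fun i => Real.sign (x i) / ∑ j ∈ univ.filter (fun j => x j ≠ 0), (G.degree j : ℝ)) i| = 1) ∧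
    ∃ z : Fin n → Fin n → ℝ,
      (∀ i j, G.Adj i j → z i j ∈ SgnSet ((fun i => Real.sign (x i) / ∑ j ∈ univ.filter (fun j => x j ≠ 0), (G.degree j : ℝ)) i - (fun i => Real.sign (x i) / ∑ j ∈ univ.filter (fun j => x j ≠ 0), (G.degree j : ℝ)) j)) ∧
      (∀ i j, G.Adj i j → z j i = - z i j) ∧
      (∀ i, ∃ s ∈ SgnSet ((fun i => Real.sign (x i) / ∑ j ∈ univ.filter (fun j => x j ≠ 0), (G.degree j : ℝ)) i),
        ∑ j ∈ G.neighborFinset i, z i j = μ * (G.degree i : ℝ) * s) := by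
  obtain ⟨hx, z, hz1, hz2, hz3⟩ := h
  set δ := ∑ j ∈ univ.filter (fun j => x j ≠ 0), (G.degree j : ℝ) with hδdef
  have hδnn : (0:ℝ) ≤ δ := Finset.sum_nonneg (fun i _ => by positivity)
  have hδpos : 0 < δ := by
    rcases hδnn.lt_or_eq with h'|h'
    · exact h'
    · exfalso
      have hall : ∀ i ∈ univ.filter (fun j => x j ≠ 0), (G.degree i:ℝ) = 0 :=
        (Finset.sum_eq_zero_iff_of_nonneg (fun i _ => by positivity)).1 h'.symm
      have hzero : ∑ i, (G.degree i : ℝ) * |x i| = 0 := by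
        apply Finset.sum_eq_zero; intro i _
        by_cases hxi : x i = 0
        · simp [hxi]
        · rw [hall i (by simp [hxi])]; ring
      rw [hzero] at hx; norm_num at hx
  refine ⟨?_, z, ?_, hz2, ?_⟩
  · have key : ∀ i, (G.degree i:ℝ) * |Real.sign (x i) / δ| =
        (if x i ≠ 0 then (G.degree i:ℝ) else 0) / δ := by
      intro i
      rcases lt_trichotomy (x i) 0 with hx'|hx'|hx'
      · rw [Real.sign_of_neg hx', if_pos (ne_of_lt hx'), abs_div, abs_of_pos hδpos]
        norm_num; ring
      · simp [hx']
      · rw [Real.sign_of_pos hx', if_pos (ne_of_gt hx'), abs_div, abs_of_pos hδpos]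
        norm_num; ring
    calc ∑ i, (G.degree i:ℝ) * |Real.sign (x i)/δ|
        = ∑ i, (if x i ≠ 0 then (G.degree i:ℝ) else 0)/δ :=
          Finset.sum_congr rfl (fun i _ => key i)
      _ = (∑ i, if x i ≠ 0 then (G.degree i:ℝ) else 0)/δ := by rw [Finset.sum_div]
      _ = δ/δ := by rw [hδdef, Finset.sum_filter]
      _ = 1 := div_self (ne_of_gt hδpos)
  · intro i j hij
    show z i j ∈ SgnSet (Real.sign (x i) / δ - Real.sign (x j) / δ)
    rw [div_sub_div_same, sgnset_div δ hδpos]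
    exact sgnset_sign_sub _ _ _ (hz1 i j hij)
  · intro i
    obtain ⟨s, hs, heq⟩ := hz3 i
    exact ⟨s, by rw [show ((fun i => Real.sign (x i) / δ) i) = Real.sign (x i) / δ from rfl,
      sgnset_sign δ hδpos]; exact hs, heq⟩

/-- Theorem 3.9/3.11: if `x` is an eigenvector of `Δ₁(G)` with eigenvalue
`μ`, then the normalized vector `x̂_i = sgn(x_i)/δ`, `δ = ∑_{x_i ≠ 0} d_i`, is also an
eigenvector with eigenvalue `μ`. -/
theorem normalized_eigenvector {n : ℕ} (G : SimpleGraph (Fin n)) [DecidableRel G.Adj]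
    (μ : ℝ) (x : Fin n → ℝ) (h : IsEigenpair G μ x) :
    IsEigenpair G μ
      (fun i => Real.sign (x i) / ∑ j ∈ univ.filter (fun j => x j ≠ 0), (G.degree j : ℝ)) := by
  unfold IsEigenpair at h ⊢
  exact normalized_eigenvector' G μ x h
end

section
/- Let (μ,x) be an eigenpair of Δ₁(G). Then μ = 1 if and only if every nodal domain of x consists of a single vertex, i.e., there is no edge {i,j} ∈ E with x_i·x_j > 0. -/
open Finset

private lemma tri_aux (a b : ℝ) : |a - b| ≤ |a| + |b| := by
  calc |a - b| = |a + (-b)| := by ring_nf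
  _ ≤ |a| + |(-b)| := abs_add_le a (-b)
  _ = |a| + |b| := by rw [abs_neg]

private lemma eq_of_nonpos_aux (a b : ℝ) (h : a * b ≤ 0) : |a - b| = |a| + |b| := by
  rcases mul_nonpos_iff.mp h with ⟨ha, hb⟩ | ⟨ha, hb⟩
  · rw [abs_of_nonneg ha, abs_of_nonpos hb, abs_of_nonneg (by linarith : (0:ℝ) ≤ a - b)]; ring
  · rw [abs_of_nonpos ha, abs_of_nonneg hb, abs_of_nonpos (by linarith : a - b ≤ 0)]; ring

private lemma lt_of_pos_aux (a b : ℝ) (h : 0 < a * b) : |a - b| < |a| + |b| := by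
  rcases mul_pos_iff.mp h with ⟨ha, hb⟩ | ⟨ha, hb⟩
  · rw [abs_of_pos ha, abs_of_pos hb]
    rcases abs_cases (a - b) with ⟨h1, _⟩ | ⟨h1, _⟩ <;> linarith
  · rw [abs_of_neg ha, abs_of_neg hb]
    rcases abs_cases (a - b) with ⟨h1, _⟩ | ⟨h1, _⟩ <;> linarith

private lemma sgn_mul_aux (t s : ℝ) (hs : s ∈ SgnSet t) : t * s = |t| := by
  unfold SgnSet at hs
  split_ifs at hs with h1 h2
  · simp only [Set.mem_singleton_iff] at hs
    rw [hs, abs_of_pos h1]; ring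
  · simp only [Set.mem_singleton_iff] at hs
    rw [hs, abs_of_neg h2]; ring
  · have ht : t = 0 := le_antisymm (not_lt.mp h1) (not_lt.mp h2)
    simp [ht]

private lemma nbr_sum_swap_aux {n : ℕ} (G : SimpleGraph (Fin n)) [DecidableRel G.Adj]
    (f : Fin n → Fin n → ℝ) :
    ∑ i, ∑ j ∈ G.neighborFinset i, f i j = ∑ i, ∑ j ∈ G.neighborFinset i, f j i := by
  have h : ∀ g : Fin n → Fin n → ℝ, ∑ i, ∑ j ∈ G.neighborFinset i, g i j
      = ∑ i, ∑ j, if G.Adj i j then g i j else 0 := by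
    intro g
    refine Finset.sum_congr rfl fun i _ => ?_
    rw [SimpleGraph.neighborFinset_eq_filter, Finset.sum_filter]
  rw [h, h, Finset.sum_comm]
  refine Finset.sum_congr rfl fun i _ => Finset.sum_congr rfl fun j _ => ?_
  by_cases hij : G.Adj i j
  · simp [hij, hij.symm]
  · have hji : ¬ G.Adj j i := fun hc => hij hc.symm
    simp [hij, hji]

/-- Theorem 5.1: for an eigenpair `(μ, x)`, `μ = 1` iff every nodal domain
of `x` is a single vertex, i.e. there is no edge `{i,j}` with `x_i · x_j > 0`. -/
theorem eigenvalue_eq_one_iff {n : ℕ} (G : SimpleGraph (Fin n)) [DecidableRel G.Adj]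
    (μ : ℝ) (x : Fin n → ℝ) (h : IsEigenpair G μ x) :
    μ = 1 ↔ ∀ i j, G.Adj i j → ¬ (0 < x i * x j) := by
  obtain ⟨hX, z, hz1, hz2, hz3⟩ := h
  choose s hs1 hs2 using hz3
  have fact1 : ∀ i, x i * s i = |x i| := fun i => sgn_mul_aux _ _ (hs1 i)
  have fact2 : ∀ i j, G.Adj i j → (x i - x j) * z i j = |x i - x j| :=
    fun i j hij => sgn_mul_aux _ _ (hz1 i j hij)
  -- μ = ∑ᵢ ∑_{j∼i} xᵢ zᵢⱼ
  have hmu : μ = ∑ i, ∑ j ∈ G.neighborFinset i, x i * z i j := by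
    calc μ = ∑ i, μ * ((G.degree i : ℝ) * |x i|) := by
          rw [← Finset.mul_sum, hX, mul_one]
      _ = ∑ i, x i * ∑ j ∈ G.neighborFinset i, z i j := by
          refine Finset.sum_congr rfl fun i _ => ?_
          rw [hs2 i, ← fact1 i]; ring
      _ = ∑ i, ∑ j ∈ G.neighborFinset i, x i * z i j := by
          simp [Finset.mul_sum]
  -- the antisymmetric twin sum
  have hswap : ∑ i, ∑ j ∈ G.neighborFinset i, x j * z i j
      = - ∑ i, ∑ j ∈ G.neighborFinset i, x i * z i j := by
    rw [nbr_sum_swap_aux G (fun i j => x j * z i j)]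
    rw [← Finset.sum_neg_distrib]
    refine Finset.sum_congr rfl fun i _ => ?_
    rw [← Finset.sum_neg_distrib]
    refine Finset.sum_congr rfl fun j hj => ?_
    have hadj : G.Adj i j := by rwa [← SimpleGraph.mem_neighborFinset]
    rw [hz2 i j hadj]; ring
  have h2mu : ∑ i, ∑ j ∈ G.neighborFinset i, |x i - x j| = 2 * μ := by
    have : ∑ i, ∑ j ∈ G.neighborFinset i, |x i - x j|
        = ∑ i, ∑ j ∈ G.neighborFinset i, (x i * z i j - x j * z i j) := by
      refine Finset.sum_congr rfl fun i _ => Finset.sum_congr rfl fun j hj => ?_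
      have hadj : G.Adj i j := by rwa [← SimpleGraph.mem_neighborFinset]
      rw [← fact2 i j hadj]; ring
    rw [this]
    simp only [Finset.sum_sub_distrib]
    rw [hswap, ← hmu]; ring
  -- ∑ᵢ ∑_{j∼i} (|xᵢ| + |xⱼ|) = 2
  have hone : ∑ i, ∑ j ∈ G.neighborFinset i, |x i| = 1 := by
    rw [← hX]
    refine Finset.sum_congr rfl fun i _ => ?_
    rw [Finset.sum_const, SimpleGraph.card_neighborFinset_eq_degree, nsmul_eq_mul]
  have htwo : ∑ i, ∑ j ∈ G.neighborFinset i, (|x i| + |x j|) = 2 := by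
    simp only [Finset.sum_add_distrib]
    rw [hone, nbr_sum_swap_aux G (fun i j => |x j|), hone]; norm_num
  have hA : ∑ i, ∑ j ∈ G.neighborFinset i, (|x i| + |x j| - |x i - x j|) = 2 - 2 * μ := by
    simp only [Finset.sum_sub_distrib]
    rw [htwo, h2mu]
  constructor
  · intro hμ i j hij
    intro hpos
    have hA0 : ∑ i, ∑ j ∈ G.neighborFinset i, (|x i| + |x j| - |x i - x j|) = 0 := by
      rw [hA, hμ]; ring
    have hnn : ∀ a ∈ (univ : Finset (Fin n)),
        0 ≤ ∑ b ∈ G.neighborFinset a, (|x a| + |x b| - |x a - x b|) :=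
      fun a _ => Finset.sum_nonneg fun b _ => by linarith [tri_aux (x a) (x b)]
    have hinner := (Finset.sum_eq_zero_iff_of_nonneg hnn).mp hA0 i (Finset.mem_univ i)
    have hterm := (Finset.sum_eq_zero_iff_of_nonneg
      (fun b _ => by linarith [tri_aux (x i) (x b)] :
        ∀ b ∈ G.neighborFinset i, 0 ≤ |x i| + |x b| - |x i - x b|)).mp hinner j
      ((SimpleGraph.mem_neighborFinset G i j).mpr hij)
    have := lt_of_pos_aux (x i) (x j) hpos
    linarith
  · intro hnod
    have hA0 : ∑ i, ∑ j ∈ G.neighborFinset i, (|x i| + |x j| - |x i - x j|) = 0 := by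
      refine Finset.sum_eq_zero fun i _ => Finset.sum_eq_zero fun j hj => ?_
      have hadj : G.Adj i j := by rwa [← SimpleGraph.mem_neighborFinset]
      have hle : x i * x j ≤ 0 := not_lt.mp (hnod i j hadj)
      rw [eq_of_nonpos_aux (x i) (x j) hle]; ring
    rw [hA0] at hA; linarith
end

section
/- Suppose every vertex of G has positive degree, and let (μ,x) be an eigenpair of Δ₁(G). Then μ < 1 if and only if every nodal domain of x contains at least one pair of adjacent vertices. -/
open Finset

lemma SgnSet_of_pos {t : ℝ} (h : 0 < t) : SgnSet t = {1} := by
  simp [SgnSet, h]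

lemma SgnSet_of_neg {t : ℝ} (h : t < 0) : SgnSet t = {-1} := by
  simp [SgnSet, h, not_lt.mpr h.le, asymm h]

lemma SgnSet_eps {ε t : ℝ} (hε : ε = 1 ∨ ε = -1) (h : 0 < ε * t) : SgnSet t = {ε} := by
  rcases hε with rfl | rfl
  · rw [one_mul] at h; exact SgnSet_of_pos h
  · have ht : t < 0 := by nlinarith
    exact SgnSet_of_neg ht

lemma key_vol {n : ℕ} (G : SimpleGraph (Fin n)) [DecidableRel G.Adj]
    (μ : ℝ) (x : Fin n → ℝ) (z : Fin n → Fin n → ℝ)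
    (hz1 : ∀ i j, G.Adj i j → z i j ∈ SgnSet (x i - x j))
    (hz2 : ∀ i j, G.Adj i j → z j i = - z i j)
    (hz3 : ∀ i, ∃ s ∈ SgnSet (x i),
      ∑ j ∈ G.neighborFinset i, z i j = μ * (G.degree i : ℝ) * s)
    (ε : ℝ) (hε : ε = 1 ∨ ε = -1)
    (S : Finset (Fin n))
    (hS1 : ∀ i ∈ S, 0 < ε * x i)
    (hS2 : ∀ i ∈ S, ∀ j, G.Adj i j → 0 < ε * x j → j ∈ S) :
    μ * ∑ i ∈ S, (G.degree i : ℝ) =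
      ∑ i ∈ S, (((G.neighborFinset i).filter (fun j => j ∉ S)).card : ℝ) := by
  classical
  have hεne : ε ≠ 0 := by rcases hε with rfl | rfl <;> norm_num
  -- eigen-equations summed over S
  have hsum : ∑ i ∈ S, ∑ j ∈ G.neighborFinset i, z i j
      = ε * (μ * ∑ i ∈ S, (G.degree i : ℝ)) := by
    rw [Finset.mul_sum, Finset.mul_sum]
    refine Finset.sum_congr rfl (fun i hi => ?_)
    obtain ⟨s, hs, he⟩ := hz3 i
    rw [SgnSet_eps hε (hS1 i hi), Set.mem_singleton_iff] at hs
    subst hs; rw [he]; ring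
  -- split each inner sum
  have hsplit : ∑ i ∈ S, ∑ j ∈ G.neighborFinset i, z i j
      = (∑ i ∈ S, ∑ j ∈ (G.neighborFinset i).filter (fun j => j ∈ S), z i j)
        + ∑ i ∈ S, ∑ j ∈ (G.neighborFinset i).filter (fun j => j ∉ S), z i j := by
    rw [← Finset.sum_add_distrib]
    refine Finset.sum_congr rfl (fun i _ => ?_)
    exact (Finset.sum_filter_add_sum_filter_not _ _ _).symm
  -- internal part is zero by antisymmetry
  have hfin : ∀ i : Fin n, (G.neighborFinset i).filter (fun j => j ∈ S)
      = S.filter (fun j => G.Adj i j) := by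
    intro i; ext j; simp [SimpleGraph.mem_neighborFinset, and_comm]
  have hint : ∑ i ∈ S, ∑ j ∈ (G.neighborFinset i).filter (fun j => j ∈ S), z i j = 0 := by
    have hT : ∑ i ∈ S, ∑ j ∈ (G.neighborFinset i).filter (fun j => j ∈ S), z i j
        = ∑ i ∈ S, ∑ j ∈ S, (if G.Adj i j then z i j else 0) := by
      refine Finset.sum_congr rfl (fun i _ => ?_)
      rw [hfin i, Finset.sum_filter]
    rw [hT]
    have h1 : ∑ i ∈ S, ∑ j ∈ S, (if G.Adj i j then z i j else 0)
        = ∑ i ∈ S, ∑ j ∈ S, (if G.Adj j i then z j i else 0) := Finset.sum_comm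
    have h2 : ∑ i ∈ S, ∑ j ∈ S, (if G.Adj j i then z j i else 0)
        = - ∑ i ∈ S, ∑ j ∈ S, (if G.Adj i j then z i j else 0) := by
      rw [← Finset.sum_neg_distrib]
      refine Finset.sum_congr rfl (fun i _ => ?_)
      rw [← Finset.sum_neg_distrib]
      refine Finset.sum_congr rfl (fun j _ => ?_)
      by_cases hij : G.Adj i j
      · simp [hij, hij.symm, hz2 i j hij]
      · have : ¬ G.Adj j i := fun h => hij h.symm
        simp [hij, this]
    linarith [h1.trans h2]
  -- boundary part
  have hbd : ∑ i ∈ S, ∑ j ∈ (G.neighborFinset i).filter (fun j => j ∉ S), z i j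
      = ε * ∑ i ∈ S, (((G.neighborFinset i).filter (fun j => j ∉ S)).card : ℝ) := by
    rw [Finset.mul_sum]
    refine Finset.sum_congr rfl (fun i hi => ?_)
    have : ∀ j ∈ (G.neighborFinset i).filter (fun j => j ∉ S), z i j = ε := by
      intro j hj
      rw [Finset.mem_filter, SimpleGraph.mem_neighborFinset] at hj
      obtain ⟨hadj, hjS⟩ := hj
      have hxj : ¬ (0 < ε * x j) := fun h => hjS (hS2 i hi j hadj h)
      have : 0 < ε * (x i - x j) := by
        have := hS1 i hi
        push_neg at hxj
        nlinarith
      have hz := hz1 i j hadj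
      rw [SgnSet_eps hε this, Set.mem_singleton_iff] at hz
      exact hz
    rw [Finset.sum_congr rfl this, Finset.sum_const, nsmul_eq_mul, mul_comm]
  have := hsum.symm.trans (hsplit.trans (by rw [hint, hbd, zero_add]))
  exact mul_left_cancel₀ hεne this

lemma vol_split {n : ℕ} (G : SimpleGraph (Fin n)) [DecidableRel G.Adj]
    (S : Finset (Fin n)) :
    ∑ i ∈ S, (G.degree i : ℝ)
      = (∑ i ∈ S, (((G.neighborFinset i).filter (fun j => j ∈ S)).card : ℝ))
        + ∑ i ∈ S, (((G.neighborFinset i).filter (fun j => j ∉ S)).card : ℝ) := by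
  classical
  rw [← Finset.sum_add_distrib]
  refine Finset.sum_congr rfl (fun i _ => ?_)
  rw [← SimpleGraph.card_neighborFinset_eq_degree]
  exact_mod_cast (Finset.card_filter_add_card_filter_not
    (s := G.neighborFinset i) (p := fun j => j ∈ S)).symm

lemma comp_iff {n : ℕ} (G : SimpleGraph (Fin n)) [DecidableRel G.Adj]
    (hdeg : ∀ i, 0 < G.degree i)
    (μ : ℝ) (x : Fin n → ℝ) (z : Fin n → Fin n → ℝ)
    (hz1 : ∀ i j, G.Adj i j → z i j ∈ SgnSet (x i - x j))
    (hz2 : ∀ i j, G.Adj i j → z j i = - z i j)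
    (hz3 : ∀ i, ∃ s ∈ SgnSet (x i),
      ∑ j ∈ G.neighborFinset i, z i j = μ * (G.degree i : ℝ) * s)
    (ε : ℝ) (hε : ε = 1 ∨ ε = -1)
    (p : Fin n → Prop) (hp : ∀ v, p v ↔ 0 < ε * x v)
    (c : (G.induce {v : Fin n | p v}).ConnectedComponent) :
    μ < 1 ↔ ∃ u v : {v : Fin n | p v},
      (G.induce {v : Fin n | p v}).connectedComponentMk u = c ∧
      (G.induce {v : Fin n | p v}).Adj u v := by
  classical
  set S : Finset (Fin n) := univ.filter
    (fun i => ∃ h : p i,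
      (G.induce {v : Fin n | p v}).connectedComponentMk ⟨i, h⟩ = c) with hSdef
  have hmem : ∀ i, i ∈ S ↔ ∃ h : p i,
      (G.induce {v : Fin n | p v}).connectedComponentMk ⟨i, h⟩ = c := by
    intro i; simp [hSdef]
  clear_value S
  have hS1 : ∀ i ∈ S, 0 < ε * x i := by
    intro i hi
    obtain ⟨hpi, -⟩ := (hmem i).mp hi
    exact (hp i).mp hpi
  have hadjH : ∀ (i j : Fin n) (hpi : p i) (hpj : p j), G.Adj i j →
      (G.induce {v : Fin n | p v}).Adj ⟨i, hpi⟩ ⟨j, hpj⟩ := by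
    intro i j hpi hpj hadj
    exact hadj
  have hS2 : ∀ i ∈ S, ∀ j, G.Adj i j → 0 < ε * x j → j ∈ S := by
    intro i hi j hadj hxj
    obtain ⟨hpi, hci⟩ := (hmem i).mp hi
    have hpj : p j := (hp j).mpr hxj
    refine (hmem j).mpr ⟨hpj, ?_⟩
    rw [← hci]
    exact SimpleGraph.ConnectedComponent.sound
      ((hadjH i j hpi hpj hadj).symm.reachable)
  have hkey := key_vol G μ x z hz1 hz2 hz3 ε hε S hS1 hS2
  have hsplit := vol_split G S
  obtain ⟨u0, hu0⟩ := c.exists_rep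
  have hu0S : (u0 : Fin n) ∈ S := by
    refine (hmem _).mpr ⟨u0.2, ?_⟩
    rwa [Subtype.coe_eta]
  have hvol : 0 < ∑ i ∈ S, (G.degree i : ℝ) := by
    refine Finset.sum_pos (fun i _ => by exact_mod_cast hdeg i) ⟨u0, hu0S⟩
  constructor
  · intro hμ
    by_contra hno
    push_neg at hno
    have hIn : ∑ i ∈ S, (((G.neighborFinset i).filter (fun j => j ∈ S)).card : ℝ) = 0 := by
      refine Finset.sum_eq_zero (fun i hi => ?_)
      have : (G.neighborFinset i).filter (fun j => j ∈ S) = ∅ := by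
        rw [Finset.eq_empty_iff_forall_notMem]
        intro j hj
        rw [Finset.mem_filter, SimpleGraph.mem_neighborFinset] at hj
        obtain ⟨hadj, hjS⟩ := hj
        obtain ⟨hpi, hci⟩ := (hmem i).mp hi
        obtain ⟨hpj, -⟩ := (hmem j).mp hjS
        exact hno ⟨i, hpi⟩ ⟨j, hpj⟩ hci (hadjH i j hpi hpj hadj)
      rw [this]; simp
    rw [hIn, zero_add] at hsplit
    rw [← hsplit] at hkey
    have hlt := mul_lt_mul_of_pos_right hμ hvol
    rw [one_mul] at hlt
    linarith
  · intro ⟨u, v, hc, hadj⟩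
    have huS : (u : Fin n) ∈ S := by
      refine (hmem _).mpr ⟨u.2, ?_⟩
      rwa [Subtype.coe_eta]
    have hvS : (v : Fin n) ∈ S := by
      refine (hmem _).mpr ⟨v.2, ?_⟩
      rw [Subtype.coe_eta, ← hc]
      exact SimpleGraph.ConnectedComponent.sound hadj.symm.reachable
    have hGadj : G.Adj (u : Fin n) (v : Fin n) := hadj
    have hIn : 0 < ∑ i ∈ S,
        (((G.neighborFinset i).filter (fun j => j ∈ S)).card : ℝ) := by
      refine Finset.sum_pos' (fun i _ => Nat.cast_nonneg _) ⟨(u : Fin n), huS, ?_⟩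
      have : (v : Fin n) ∈ (G.neighborFinset (u : Fin n)).filter (fun j => j ∈ S) := by
        rw [Finset.mem_filter, SimpleGraph.mem_neighborFinset]
        exact ⟨hGadj, hvS⟩
      have hpos := Finset.card_pos.mpr ⟨_, this⟩
      exact_mod_cast hpos
    have hlt : μ * (∑ i ∈ S, (G.degree i : ℝ)) < 1 * (∑ i ∈ S, (G.degree i : ℝ)) := by
      rw [one_mul]; linarith
    exact lt_of_mul_lt_mul_right hlt hvol.le

theorem eigenvalue_lt_one_iff' {n : ℕ} (G : SimpleGraph (Fin n)) [DecidableRel G.Adj]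
    (hdeg : ∀ i, 0 < G.degree i)
    (μ : ℝ) (x : Fin n → ℝ)
    (h : (∑ i, (G.degree i : ℝ) * |x i| = 1) ∧
      ∃ z : Fin n → Fin n → ℝ,
        (∀ i j, G.Adj i j → z i j ∈ SgnSet (x i - x j)) ∧
        (∀ i j, G.Adj i j → z j i = - z i j) ∧
        (∀ i, ∃ s ∈ SgnSet (x i),
          ∑ j ∈ G.neighborFinset i, z i j = μ * (G.degree i : ℝ) * s)) :
    μ < 1 ↔
      ((∀ c : (G.induce {v : Fin n | 0 < x v}).ConnectedComponent,
          ∃ u v : {v : Fin n | 0 < x v},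
            (G.induce {v : Fin n | 0 < x v}).connectedComponentMk u = c ∧
            (G.induce {v : Fin n | 0 < x v}).Adj u v) ∧
        (∀ c : (G.induce {v : Fin n | x v < 0}).ConnectedComponent,
          ∃ u v : {v : Fin n | x v < 0},
            (G.induce {v : Fin n | x v < 0}).connectedComponentMk u = c ∧
            (G.induce {v : Fin n | x v < 0}).Adj u v)) := by
  obtain ⟨hx, z, hz1, hz2, hz3⟩ := h
  have hppos : ∀ v, 0 < x v ↔ 0 < (1 : ℝ) * x v := by intro v; rw [one_mul]
  have hpneg : ∀ v, x v < 0 ↔ 0 < (-1 : ℝ) * x v := by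
    intro v; constructor <;> intro hv <;> nlinarith
  constructor
  · intro hμ
    exact ⟨fun c => (comp_iff G hdeg μ x z hz1 hz2 hz3 1 (Or.inl rfl)
        (fun v => 0 < x v) hppos c).mp hμ,
      fun c => (comp_iff G hdeg μ x z hz1 hz2 hz3 (-1) (Or.inr rfl)
        (fun v => x v < 0) hpneg c).mp hμ⟩
  · intro ⟨h1, h2⟩
    have hex : ∃ i, x i ≠ 0 := by
      by_contra hall
      push_neg at hall
      rw [Finset.sum_eq_zero (fun i _ => by rw [hall i]; simp)] at hx
      norm_num at hx
    obtain ⟨i, hi⟩ := hex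
    rcases lt_or_gt_of_ne hi with hneg | hpos
    · exact (comp_iff G hdeg μ x z hz1 hz2 hz3 (-1) (Or.inr rfl)
        (fun v => x v < 0) hpneg
        ((G.induce {v : Fin n | x v < 0}).connectedComponentMk ⟨i, hneg⟩)).mpr
        (h2 _)
    · exact (comp_iff G hdeg μ x z hz1 hz2 hz3 1 (Or.inl rfl)
        (fun v => 0 < x v) hppos
        ((G.induce {v : Fin n | 0 < x v}).connectedComponentMk ⟨i, hpos⟩)).mpr
        (h1 _)

/-- Theorem 5.2: if every vertex has positive degree and `(μ, x)` is an
eigenpair, then `μ < 1` iff every nodal domain of `x` (connected component of the subgraph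
induced on the positive resp. negative support) contains a pair of adjacent vertices. -/
theorem eigenvalue_lt_one_iff {n : ℕ} (G : SimpleGraph (Fin n)) [DecidableRel G.Adj]
    (hdeg : ∀ i, 0 < G.degree i)
    (μ : ℝ) (x : Fin n → ℝ) (h : IsEigenpair G μ x) :
    μ < 1 ↔
      ((∀ c : (G.induce {v : Fin n | 0 < x v}).ConnectedComponent,
          ∃ u v : {v : Fin n | 0 < x v},
            (G.induce {v : Fin n | 0 < x v}).connectedComponentMk u = c ∧
            (G.induce {v : Fin n | 0 < x v}).Adj u v) ∧
        (∀ c : (G.induce {v : Fin n | x v < 0}).ConnectedComponent,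
          ∃ u v : {v : Fin n | x v < 0},
            (G.induce {v : Fin n | x v < 0}).connectedComponentMk u = c ∧
            (G.induce {v : Fin n | x v < 0}).Adj u v)) := by
  exact eigenvalue_lt_one_iff' G hdeg μ x h
end

section
/- Let G be a connected graph with n ≥ 2 vertices and suppose there exists a vertex i₀ such that d_{i₀} = ∑_{i ≠ i₀} d_i. Then every eigenvalue of Δ₁(G) equals 0 or 1. -/
open Finset

lemma sgn_abs_le {t z : ℝ} (h : z ∈ SgnSet t) : |z| ≤ 1 := by
  unfold SgnSet at h
  split_ifs at h with h1 h2
  · simp [Set.mem_singleton_iff.mp h]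
  · simp [Set.mem_singleton_iff.mp h]
  · exact abs_le.mpr ⟨h.1, h.2⟩

lemma sgn_of_pos {t z : ℝ} (ht : 0 < t) (h : z ∈ SgnSet t) : z = 1 := by
  unfold SgnSet at h; rw [if_pos ht] at h; exact h

lemma sgn_of_neg {t z : ℝ} (ht : t < 0) (h : z ∈ SgnSet t) : z = -1 := by
  unfold SgnSet at h; rw [if_neg (by linarith), if_pos ht] at h; exact h

lemma sgn_of_ne {t z : ℝ} (ht : t ≠ 0) (h : z ∈ SgnSet t) : z = 1 ∨ z = -1 := by
  rcases lt_trichotomy t 0 with h1 | h1 | h1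
  · exact Or.inr (sgn_of_neg h1 h)
  · exact absurd h1 ht
  · exact Or.inl (sgn_of_pos h1 h)

lemma sgn_unique {t z w : ℝ} (ht : t ≠ 0) (hz : z ∈ SgnSet t) (hw : w ∈ SgnSet t) :
    z = w := by
  rcases lt_trichotomy t 0 with h1 | h1 | h1
  · rw [sgn_of_neg h1 hz, sgn_of_neg h1 hw]
  · exact absurd h1 ht
  · rw [sgn_of_pos h1 hz, sgn_of_pos h1 hw]

lemma nonneg_of_one_mem {t : ℝ} (h : (1:ℝ) ∈ SgnSet t) : 0 ≤ t := by
  by_contra hc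
  have := sgn_of_neg (by linarith : t < 0) h
  norm_num at this

lemma nonpos_of_neg_one_mem {t : ℝ} (h : (-1:ℝ) ∈ SgnSet t) : t ≤ 0 := by
  by_contra hc
  have := sgn_of_pos (by linarith : 0 < t) h
  norm_num at this

lemma star_structure {n : ℕ} (G : SimpleGraph (Fin n)) [DecidableRel G.Adj]
    (hconn : G.Connected) (hn : 2 ≤ n) (i₀ : Fin n)
    (hd : G.degree i₀ = ∑ i ∈ univ.erase i₀, G.degree i) :
    (G.neighborFinset i₀ = univ.erase i₀) ∧ (∀ j, j ≠ i₀ → G.degree j = 1) := by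
  have hpos : ∀ i ∈ univ.erase i₀, 1 ≤ G.degree i := by
    intro i hi
    rw [mem_erase] at hi
    rw [Nat.one_le_iff_ne_zero, ← Nat.pos_iff_ne_zero,
      SimpleGraph.degree_pos_iff_exists_adj]
    obtain ⟨p⟩ := hconn i i₀
    cases p with
    | nil => exact absurd rfl hi.1
    | cons hadj _ => exact ⟨_, hadj⟩
  have hcard : (univ.erase i₀).card = n - 1 := by
    rw [card_erase_of_mem (mem_univ _), card_univ, Fintype.card_fin]
  have hsum_ge : n - 1 ≤ ∑ i ∈ univ.erase i₀, G.degree i := by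
    calc n - 1 = ∑ _i ∈ univ.erase i₀, 1 := by rw [sum_const, smul_eq_mul, mul_one, hcard]
    _ ≤ _ := sum_le_sum hpos
  have hdle : G.degree i₀ ≤ n - 1 := by
    have := G.degree_lt_card_verts i₀
    rw [Fintype.card_fin] at this
    omega
  have hsum_eq : ∑ i ∈ univ.erase i₀, G.degree i = ∑ _i ∈ univ.erase i₀, 1 := by
    rw [sum_const, smul_eq_mul, mul_one, hcard]; omega
  have hdeg1 : ∀ j, j ≠ i₀ → G.degree j = 1 := by
    intro j hj
    exact (sum_eq_sum_iff_of_le hpos).mp hsum_eq.symm j (mem_erase.mpr ⟨hj, mem_univ _⟩) |>.symm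
  have hdeg0 : G.degree i₀ = n - 1 := by omega
  have hsub : G.neighborFinset i₀ ⊆ univ.erase i₀ := by
    intro j hj
    rw [SimpleGraph.mem_neighborFinset] at hj
    exact mem_erase.mpr ⟨(G.ne_of_adj hj).symm, mem_univ _⟩
  have : G.neighborFinset i₀ = univ.erase i₀ := by
    apply eq_of_subset_of_card_le hsub
    rw [hcard, SimpleGraph.card_neighborFinset_eq_degree, hdeg0]
  exact ⟨this, hdeg1⟩

/-- Corollary 5.3: if `G` is connected, `n ≥ 2`, and some vertex `i₀` has
`d_{i₀} = ∑_{i ≠ i₀} d_i`, then every eigenvalue of `Δ₁(G)` is `0` or `1`. -/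
theorem eigenvalues_zero_or_one {n : ℕ} (G : SimpleGraph (Fin n)) [DecidableRel G.Adj]
    (hconn : G.Connected) (hn : 2 ≤ n)
    (i₀ : Fin n) (hd : G.degree i₀ = ∑ i ∈ univ.erase i₀, G.degree i)
    (μ : ℝ) (x : Fin n → ℝ) (h : IsEigenpair G μ x) :
    μ = 0 ∨ μ = 1 := by
  obtain ⟨hN, hdeg1⟩ := star_structure G hconn hn i₀ hd
  obtain ⟨hx, z, hz1, hz2, hz3⟩ := h
  have hadj : ∀ j, j ≠ i₀ → G.Adj i₀ j := by
    intro j hj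
    rw [← SimpleGraph.mem_neighborFinset, hN]
    exact mem_erase.mpr ⟨hj, mem_univ _⟩
  have hNj : ∀ j, j ≠ i₀ → G.neighborFinset j = {i₀} := by
    intro j hj
    have h1 : (G.neighborFinset j).card = 1 := by
      rw [SimpleGraph.card_neighborFinset_eq_degree]; exact hdeg1 j hj
    obtain ⟨a, ha⟩ := card_eq_one.mp h1
    have hmem : i₀ ∈ G.neighborFinset j := by
      rw [SimpleGraph.mem_neighborFinset]; exact (hadj j hj).symm
    rw [ha] at hmem ⊢
    rw [mem_singleton] at hmem
    rw [hmem]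
  have hleaf : ∀ j, j ≠ i₀ → ∃ s ∈ SgnSet (x j), z j i₀ = μ * s := by
    intro j hj
    obtain ⟨s, hs, heq⟩ := hz3 j
    refine ⟨s, hs, ?_⟩
    rw [hNj j hj, sum_singleton, hdeg1 j hj] at heq
    rw [heq]; push_cast; ring
  obtain ⟨sc, hsc, hceq⟩ := hz3 i₀
  rw [hN] at hceq
  set m : ℝ := (G.degree i₀ : ℝ) with hm
  -- m = card of erase, m ≥ 1
  have hcardnat : (univ.erase i₀).card = G.degree i₀ := by
    rw [← SimpleGraph.card_neighborFinset_eq_degree, hN]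
  have hcardm : ((univ.erase i₀).card : ℝ) = m := by rw [hcardnat]
  obtain ⟨j₁, hj₁⟩ := Fintype.exists_ne_of_one_lt_card (by rw [Fintype.card_fin]; omega) i₀
  have hm1 : 1 ≤ m := by
    have : 0 < G.degree i₀ := by
      rw [SimpleGraph.degree_pos_iff_exists_adj]
      exact ⟨j₁, hadj j₁ hj₁⟩
    rw [hm]; exact_mod_cast this
  by_cases hall : ∀ j, x j = x i₀
  · -- constant vector : μ = 0
    left
    have hc0 : x i₀ ≠ 0 := by
      intro hc
      simp only [hall, hc, abs_zero, mul_zero, sum_const_zero] at hx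
      norm_num at hx
    have hzval : ∀ j ∈ univ.erase i₀, z i₀ j = -(μ * sc) := by
      intro j hjmem
      rw [mem_erase] at hjmem
      obtain ⟨s, hs, hzj⟩ := hleaf j hjmem.1
      rw [hall j] at hs
      have hse : s = sc := sgn_unique hc0 hs hsc
      have h2 := hz2 i₀ j (hadj j hjmem.1)
      rw [hzj, hse] at h2
      linarith
    rw [sum_congr rfl hzval, sum_const, hcardnat, nsmul_eq_mul] at hceq
    have hsc1 : sc = 1 ∨ sc = -1 := sgn_of_ne hc0 hsc
    rcases hsc1 with h1 | h1 <;> rw [h1] at hceq <;> nlinarith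
  · -- nonconstant : μ = 1
    right
    push_neg at hall
    obtain ⟨j, hjx⟩ := hall
    have hjne : j ≠ i₀ := by intro hc; rw [hc] at hjx; exact hjx rfl
    have ht : x i₀ - x j ≠ 0 := fun hc => hjx (by linarith [sub_eq_zero.mp hc])
    have hze := hz1 i₀ j (hadj j hjne)
    have he : z i₀ j = 1 ∨ z i₀ j = -1 := sgn_of_ne ht hze
    obtain ⟨s, hs, hzj⟩ := hleaf j hjne
    have h2 := hz2 i₀ j (hadj j hjne)
    -- h2 : z j i₀ = - z i₀ j ; hzj : z j i₀ = μ * s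
    have hkey : μ * s = - z i₀ j := by rw [← hzj, h2]
    have habs_e : |z i₀ j| = 1 := by rcases he with h1 | h1 <;> rw [h1] <;> norm_num
    have hs_le : |s| ≤ 1 := sgn_abs_le hs
    have hmu_ge : 1 ≤ |μ| := by
      have : |μ * s| = 1 := by rw [hkey, abs_neg, habs_e]
      rw [abs_mul] at this
      nlinarith [abs_nonneg μ, abs_nonneg s]
    -- |μ| ≤ 1
    have hsum_bound : |∑ j' ∈ univ.erase i₀, z i₀ j'| ≤ m := by
      calc |∑ j' ∈ univ.erase i₀, z i₀ j'| ≤ ∑ j' ∈ univ.erase i₀, |z i₀ j'| :=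
        abs_sum_le_sum_abs _ _
      _ ≤ ∑ _j' ∈ univ.erase i₀, 1 := by
          apply sum_le_sum
          intro k hk
          rw [mem_erase] at hk
          exact sgn_abs_le (hz1 i₀ k (hadj k hk.1))
      _ = m := by rw [sum_const, nsmul_eq_mul, mul_one, hcardm]
    have hmu_le : |μ| ≤ 1 := by
      by_cases hx0 : x i₀ = 0
      · have hxj : x j ≠ 0 := by
          intro hc; apply ht; rw [hx0, hc]; ring
        have hs1 : s = 1 ∨ s = -1 := sgn_of_ne hxj hs
        have : |μ| * |s| = 1 := by
          rw [← abs_mul, hkey, abs_neg, habs_e]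
        rcases hs1 with h1 | h1 <;> rw [h1] at this <;> simp at this <;> linarith [this.le]
      · have hsc1 : sc = 1 ∨ sc = -1 := sgn_of_ne hx0 hsc
        have habs : |μ * m * sc| = |μ| * m := by
          rcases hsc1 with h1 | h1 <;> rw [h1, abs_mul] <;>
            simp [abs_mul, abs_of_nonneg (by linarith : (0:ℝ) ≤ m)]
        rw [hceq, habs] at hsum_bound
        nlinarith
    have hmu : μ = 1 ∨ μ = -1 := by
      have : |μ| = 1 := le_antisymm hmu_le hmu_ge
      rcases abs_eq (by norm_num : (0:ℝ) ≤ 1) |>.mp this with h1 | h1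
      · exact Or.inl h1
      · exact Or.inr h1
    rcases hmu with h1 | h1
    · exact h1
    -- rule out μ = -1
    exfalso
    rw [h1] at hkey
    -- hkey : -s = - z i₀ j, so s = z i₀ j
    have hse : s = z i₀ j := by linarith
    -- sum splitting helper
    set S := (univ.erase i₀).erase j with hS
    have hjmem : j ∈ univ.erase i₀ := mem_erase.mpr ⟨hjne, mem_univ _⟩
    have hsplit : ∑ k ∈ S, z i₀ k + z i₀ j = ∑ k ∈ univ.erase i₀, z i₀ k :=
      sum_erase_add _ _ hjmem
    have hScard : (S.card : ℝ) = m - 1 := by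
      have h3 : S.card + 1 = (univ.erase i₀).card := by
        rw [hS, card_erase_of_mem hjmem]
        have : 1 ≤ (univ.erase i₀).card := card_pos.mpr ⟨j, hjmem⟩
        omega
      have := congrArg (fun k : ℕ => (k : ℝ)) h3
      push_cast at this
      linarith [hcardm, this]
    have hSbound : ∀ k ∈ S, |z i₀ k| ≤ 1 := by
      intro k hk
      rw [hS, mem_erase, mem_erase] at hk
      exact sgn_abs_le (hz1 i₀ k (hadj k hk.2.1))
    have hSlo : -(m - 1) ≤ ∑ k ∈ S, z i₀ k := by
      calc -(m-1) = ∑ _k ∈ S, (-1 : ℝ) := by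
            rw [sum_const, nsmul_eq_mul, hScard]; ring
      _ ≤ ∑ k ∈ S, z i₀ k := by
            apply sum_le_sum; intro k hk
            linarith [abs_le.mp (hSbound k hk) |>.1]
    have hShi : ∑ k ∈ S, z i₀ k ≤ m - 1 := by
      calc ∑ k ∈ S, z i₀ k ≤ ∑ _k ∈ S, (1 : ℝ) := by
            apply sum_le_sum; intro k hk
            linarith [abs_le.mp (hSbound k hk) |>.2]
      _ = m - 1 := by rw [sum_const, nsmul_eq_mul, hScard]; ring
    rcases he with he1 | he1
    · -- z i₀ j = 1 : x i₀ > x j ≥ 0, sc = 1, sum = -m, contradiction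
      have hs_eq : s = 1 := hse.trans he1
      have hxj_nonneg : 0 ≤ x j := nonneg_of_one_mem (hs_eq ▸ hs)
      have hxi_pos : 0 < x i₀ := by
        have h4 : 0 ≤ x i₀ - x j := nonneg_of_one_mem (he1 ▸ hze)
        rcases lt_or_eq_of_le h4 with h5 | h5
        · linarith
        · exact absurd h5.symm ht
      have hsc1 : sc = 1 := sgn_of_pos hxi_pos hsc
      rw [h1, hsc1] at hceq
      rw [← hsplit, he1] at hceq
      -- hceq : ∑ S + 1 = -1 * m * 1
      nlinarith
    · -- z i₀ j = -1 : x i₀ < x j ≤ 0, sc = -1, sum = m, contradiction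
      have hs_eq : s = -1 := hse.trans he1
      have hxj_nonpos : x j ≤ 0 := nonpos_of_neg_one_mem (hs_eq ▸ hs)
      have hxi_neg : x i₀ < 0 := by
        have h4 : x i₀ - x j ≤ 0 := nonpos_of_neg_one_mem (he1 ▸ hze)
        rcases lt_or_eq_of_le h4 with h5 | h5
        · linarith
        · exact absurd h5 ht
      have hsc1 : sc = -1 := sgn_of_neg hxi_neg hsc
      rw [h1, hsc1] at hceq
      rw [← hsplit, he1] at hceq
      nlinarith
end

section
/- Suppose G has at least one edge, so d > 0, and let x⁰ be the constant vector with x⁰_i = 1/d for all i ∈ V. Then G is connected if and only if every eigenvector of Δ₁(G) with eigenvalue 0 equals x⁰ or −x⁰. -/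
open Finset

lemma sgnSet_nonempty' (t : ℝ) : ∃ s, s ∈ SgnSet t := by
  unfold SgnSet
  split_ifs with h1 h2
  · exact ⟨1, rfl⟩
  · exact ⟨-1, rfl⟩
  · exact ⟨0, by constructor <;> norm_num⟩

lemma zero_mem_sgnSet' : (0:ℝ) ∈ SgnSet 0 := by
  unfold SgnSet; norm_num

lemma eigen_zero_of_locally_const {n : ℕ} (G : SimpleGraph (Fin n)) [DecidableRel G.Adj]
    (x : Fin n → ℝ) (hsum : ∑ i, (G.degree i : ℝ) * |x i| = 1)
    (hconst : ∀ i j, G.Adj i j → x i = x j) : IsEigenpair G 0 x := by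
  refine ⟨hsum, fun _ _ => 0, ?_, ?_, ?_⟩
  · intro i j h
    have : x i - x j = 0 := by rw [hconst i j h]; ring
    rw [this]; exact zero_mem_sgnSet'
  · intro i j _; ring
  · intro i
    obtain ⟨s, hs⟩ := sgnSet_nonempty' (x i)
    exact ⟨s, hs, by simp⟩

/-- Theorem 5.4: if `G` has an edge, then `G` is connected iff every
eigenvector with eigenvalue `0` equals `x⁰` or `−x⁰`, where `x⁰_i = 1/d`. -/
theorem connected_iff_zero_simple {n : ℕ} (G : SimpleGraph (Fin n)) [DecidableRel G.Adj]
    (hE : G.edgeFinset.Nonempty) :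
    G.Connected ↔
      ∀ x : Fin n → ℝ, IsEigenpair G 0 x →
        (x = fun _ => 1 / (∑ i, (G.degree i : ℝ))) ∨
        (x = fun _ => -(1 / (∑ i, (G.degree i : ℝ)))) := by

  classical
  have hadj : ∃ a b, G.Adj a b := by
    obtain ⟨e, he⟩ := hE
    induction e using Sym2.ind with
    | _ a b => exact ⟨a, b, by simpa using he⟩
  obtain ⟨a, b, hab⟩ := hadj
  set d : ℝ := ∑ i, (G.degree i : ℝ) with hd_def
  have hd : 0 < d := by
    have h1 : 0 < G.degree a := G.degree_pos_iff_exists_adj a |>.mpr ⟨b, hab⟩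
    have h2 : (G.degree a : ℝ) ≤ d :=
      Finset.single_le_sum (f := fun i => (G.degree i : ℝ))
        (fun i _ => by positivity) (mem_univ a)
    have : (0:ℝ) < (G.degree a : ℝ) := by exact_mod_cast h1
    linarith
  constructor
  · -- connected → eigenvectors with eigenvalue 0 are ±x⁰
    intro hconn x hx
    obtain ⟨hx1, z, hz1, hz2, hz3⟩ := hx
    have hzero : ∀ i, ∑ j ∈ G.neighborFinset i, z i j = 0 := by
      intro i
      obtain ⟨s, _, hs⟩ := hz3 i
      rw [hs]; ring
    obtain ⟨i0, -, hi0⟩ := Finset.exists_max_image univ x ⟨a, mem_univ a⟩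
    have hi0' : ∀ j, x j ≤ x i0 := fun j => hi0 j (mem_univ j)
    set S : Finset (Fin n) := univ.filter (fun i => x i = x i0) with hS_def
    have hQ : ∑ i ∈ S, ∑ j ∈ G.neighborFinset i, z i j = 0 :=
      Finset.sum_eq_zero fun i _ => hzero i
    have hT : ∑ i ∈ S, ∑ j ∈ G.neighborFinset i ∩ S, z i j = 0 := by
      have h1 : ∀ i ∈ S, ∑ j ∈ G.neighborFinset i ∩ S, z i j
          = ∑ j ∈ S, if G.Adj i j then z i j else 0 := by
        intro i _
        rw [← Finset.sum_filter]
        apply Finset.sum_congr _ (fun _ _ => rfl)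
        ext j
        simp only [Finset.mem_inter, SimpleGraph.mem_neighborFinset, Finset.mem_filter]
        tauto
      rw [Finset.sum_congr rfl h1, ← Finset.sum_product']
      apply Finset.sum_involution (fun p _ => Prod.swap p)
      · intro p hp
        by_cases h : G.Adj p.1 p.2
        · have h' : G.Adj p.2 p.1 := h.symm
          simp only [Prod.fst_swap, Prod.snd_swap, if_pos h, if_pos h']
          rw [hz2 p.1 p.2 h]; ring
        · have h' : ¬ G.Adj p.2 p.1 := fun hc => h hc.symm
          simp [h, h']
      · intro p hp hfp
        by_cases h : G.Adj p.1 p.2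
        · intro hc
          exact G.ne_of_adj h (congrArg Prod.snd hc)
        · simp [h] at hfp
      · intro p hp
        rcases Finset.mem_product.mp hp with ⟨h1, h2⟩
        exact Finset.mem_product.mpr ⟨h2, h1⟩
      · intro p hp; exact Prod.swap_swap p
    have hone : ∀ i ∈ S, ∀ j ∈ G.neighborFinset i \ S, z i j = 1 := by
      intro i hi j hj
      rcases Finset.mem_sdiff.mp hj with ⟨hj1, hj2⟩
      have hadj' : G.Adj i j := (SimpleGraph.mem_neighborFinset _ _ _).mp hj1
      have hxi : x i = x i0 := (Finset.mem_filter.mp hi).2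
      have hxj : x j ≠ x i0 := by
        intro hc; exact hj2 (Finset.mem_filter.mpr ⟨mem_univ j, hc⟩)
      have hlt : x j < x i0 := lt_of_le_of_ne (hi0' j) hxj
      have hpos : 0 < x i - x j := by rw [hxi]; linarith
      have := hz1 i j hadj'
      rw [show SgnSet (x i - x j) = {1} from if_pos hpos] at this
      exact this
    have hB : ∑ i ∈ S, ∑ j ∈ G.neighborFinset i \ S, z i j = 0 := by
      have hsplit : ∑ i ∈ S, ((∑ j ∈ G.neighborFinset i ∩ S, z i j)
          + ∑ j ∈ G.neighborFinset i \ S, z i j) = 0 := by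
        rw [show (fun i => (∑ j ∈ G.neighborFinset i ∩ S, z i j)
            + ∑ j ∈ G.neighborFinset i \ S, z i j) = fun i => ∑ j ∈ G.neighborFinset i, z i j
          from funext fun i => Finset.sum_inter_add_sum_sdiff _ _ _]
        exact hQ
      rw [Finset.sum_add_distrib, hT, zero_add] at hsplit
      exact hsplit
    have hclosed : ∀ i, x i = x i0 → ∀ j, G.Adj i j → x j = x i0 := by
      intro i hxi j hadj'
      by_contra hxj
      have hiS : i ∈ S := Finset.mem_filter.mpr ⟨mem_univ i, hxi⟩
      have hjmem : j ∈ G.neighborFinset i \ S := by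
        refine Finset.mem_sdiff.mpr ⟨(SimpleGraph.mem_neighborFinset _ _ _).mpr hadj', ?_⟩
        intro hc; exact hxj (Finset.mem_filter.mp hc).2
      have hinner : ∀ k ∈ S, (0:ℝ) ≤ ∑ j ∈ G.neighborFinset k \ S, z k j :=
        fun k hk => Finset.sum_nonneg fun m hm => by rw [hone k hk m hm]; norm_num
      have h0 : ∑ j ∈ G.neighborFinset i \ S, z i j = 0 :=
        (Finset.sum_eq_zero_iff_of_nonneg hinner).mp hB i hiS
      have h1 : (1:ℝ) ≤ ∑ j ∈ G.neighborFinset i \ S, z i j := by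
        rw [← hone i hiS j hjmem]
        exact Finset.single_le_sum
          (fun m hm => by rw [hone i hiS m hm]; norm_num) hjmem
      linarith
    have hwalk : ∀ (u v : Fin n), G.Walk u v → x u = x i0 → x v = x i0 := by
      intro u v w
      induction w with
      | nil => exact id
      | cons h p ih => exact fun h1 => ih (hclosed _ h1 _ h)
    have hconst : ∀ j, x j = x i0 :=
      fun j => (hconn.preconnected i0 j).elim fun w => hwalk _ _ w rfl
    have hsum : d * |x i0| = 1 := by
      rw [← hx1, Finset.sum_mul]
      exact (Finset.sum_congr rfl fun i _ => by rw [hconst i]).symm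
    have habs : |x i0| = 1 / d := by
      rw [eq_div_iff hd.ne']
      linarith
    rcases (abs_eq (by positivity : (0:ℝ) ≤ 1 / d)).mp habs with h | h
    · exact Or.inl (funext fun j => by rw [hconst j, h])
    · exact Or.inr (funext fun j => by rw [hconst j, h])
  · -- eigenvectors are ±x⁰ → connected
    intro H
    have hno : ∀ i, 0 < G.degree i := by
      by_contra hc
      push_neg at hc
      obtain ⟨i0, hi0⟩ := hc
      have hdeg0 : G.degree i0 = 0 := Nat.le_antisymm hi0 (Nat.zero_le _)
      set x : Fin n → ℝ := fun i => if i = i0 then 0 else 1 / d with hx_def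
      have hne : ∀ i j, G.Adj i j → i ≠ i0 := by
        intro i j h hc'
        subst hc'
        have : 0 < G.degree i := G.degree_pos_iff_exists_adj i |>.mpr ⟨j, h⟩
        omega
      have hpair : IsEigenpair G 0 x := by
        apply eigen_zero_of_locally_const
        · have h1 : ∀ i ∈ univ, (G.degree i : ℝ) * |x i| = (G.degree i : ℝ) * (1 / d) := by
            intro i _
            by_cases h : i = i0
            · subst h; rw [hdeg0]; norm_num
            · simp only [hx_def, if_neg h]
              rw [abs_of_pos (by positivity)]
          rw [Finset.sum_congr rfl h1, ← Finset.sum_mul, ← hd_def]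
          field_simp
        · intro i j h
          simp only [hx_def, if_neg (hne i j h), if_neg (hne j i h.symm)]
      rcases H x hpair with h | h
      · have := congrFun h i0
        simp only [hx_def, if_pos rfl] at this
        have : (0:ℝ) < 1 / d := by positivity
        rw [← ‹(0:ℝ) = 1 / d›] at this
        exact lt_irrefl 0 this
      · have hane : a ≠ i0 := hne a b hab
        have := congrFun h a
        simp only [hx_def, if_neg hane] at this
        have h2 : (0:ℝ) < 1 / d := by positivity
        linarith [this]
    rw [SimpleGraph.connected_iff]
    refine ⟨?_, ⟨a⟩⟩
    intro u v
    by_contra huv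
    set A : Finset (Fin n) := univ.filter (fun i => G.Reachable u i) with hA_def
    set volA : ℝ := ∑ i ∈ A, (G.degree i : ℝ) with hvolA_def
    set volB : ℝ := ∑ i ∈ univ.filter (fun i => ¬ G.Reachable u i), (G.degree i : ℝ)
      with hvolB_def
    have hvolA : 0 < volA := by
      apply Finset.sum_pos
      · intro i _; exact_mod_cast hno i
      · exact ⟨u, Finset.mem_filter.mpr ⟨mem_univ u, SimpleGraph.Reachable.refl u⟩⟩
    have hvolB : 0 < volB := by
      apply Finset.sum_pos
      · intro i _; exact_mod_cast hno i
      · exact ⟨v, Finset.mem_filter.mpr ⟨mem_univ v, huv⟩⟩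
    set x : Fin n → ℝ := fun i =>
      if G.Reachable u i then 1 / (2 * volA) else -(1 / (2 * volB)) with hx_def
    have hpair : IsEigenpair G 0 x := by
      apply eigen_zero_of_locally_const
      · rw [← Finset.sum_filter_add_sum_filter_not univ (fun i => G.Reachable u i)]
        have h1 : ∀ i ∈ univ.filter (fun i => G.Reachable u i),
            (G.degree i : ℝ) * |x i| = (G.degree i : ℝ) * (1 / (2 * volA)) := by
          intro i hi
          have := (Finset.mem_filter.mp hi).2
          simp only [hx_def, if_pos this]
          rw [abs_of_pos (div_pos one_pos (by linarith))]
        have h2 : ∀ i ∈ univ.filter (fun i => ¬ G.Reachable u i),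
            (G.degree i : ℝ) * |x i| = (G.degree i : ℝ) * (1 / (2 * volB)) := by
          intro i hi
          have := (Finset.mem_filter.mp hi).2
          simp only [hx_def, if_neg this]
          rw [abs_neg, abs_of_pos (div_pos one_pos (by linarith))]
        rw [Finset.sum_congr rfl h1, Finset.sum_congr rfl h2,
          ← Finset.sum_mul, ← Finset.sum_mul, ← hvolA_def, ← hvolB_def]
        field_simp
        ring
      · intro i j h
        have hiff : G.Reachable u i ↔ G.Reachable u j :=
          ⟨fun hr => hr.trans h.reachable, fun hr => hr.trans h.symm.reachable⟩
        simp only [hx_def]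
        by_cases hr : G.Reachable u i
        · rw [if_pos hr, if_pos (hiff.mp hr)]
        · rw [if_neg hr, if_neg (fun hc => hr (hiff.mpr hc))]
    rcases H x hpair with h | h
    · have := congrFun h v
      have hv : x v = -(1 / (2 * volB)) := by rw [hx_def]; exact if_neg huv
      rw [hv] at this
      have h2 : (0:ℝ) < 1 / d := div_pos one_pos hd
      have h3 : (0:ℝ) < 1 / (2 * volB) := div_pos one_pos (by linarith)
      linarith [this]
    · have := congrFun h u
      have hu : x u = 1 / (2 * volA) := by rw [hx_def]; exact if_pos (SimpleGraph.Reachable.refl u)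
      rw [hu] at this
      have h2 : (0:ℝ) < 1 / d := div_pos one_pos hd
      have h3 : (0:ℝ) < 1 / (2 * volA) := div_pos one_pos (by linarith)
      linarith [this]
end

section
/- Let G be a connected graph with n ≥ 2 vertices. If μ is an eigenvalue of Δ₁(G) with 0 < μ < 1, then 2/d ≤ μ ≤ (n−2)/(n−1). -/
open Finset

lemma mem_sgnSet_pos {t s : ℝ} (ht : 0 < t) (hs : s ∈ SgnSet t) : s = 1 := by
  simpa [SgnSet, ht] using hs

lemma mem_sgnSet_neg {t s : ℝ} (ht : t < 0) (hs : s ∈ SgnSet t) : s = -1 := by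
  simpa [SgnSet, ht, asymm ht] using hs

lemma abs_le_one_of_mem_sgnSet {t s : ℝ} (hs : s ∈ SgnSet t) : |s| ≤ 1 := by
  rcases lt_trichotomy t 0 with h | h | h
  · rw [mem_sgnSet_neg h hs]; norm_num
  · subst h; simp [SgnSet] at hs; rw [abs_le]; exact hs
  · rw [mem_sgnSet_pos h hs]; norm_num

lemma neg_mem_sgnSet {t s : ℝ} (hs : s ∈ SgnSet t) : -s ∈ SgnSet (-t) := by
  rcases lt_trichotomy t 0 with h | h | h
  · rw [mem_sgnSet_neg h hs]; simp [SgnSet, neg_pos.mpr h]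
  · subst h; simp only [SgnSet, lt_irrefl, if_false, neg_zero, Set.mem_Icc] at hs ⊢
    constructor <;> linarith [hs.1, hs.2]
  · rw [mem_sgnSet_pos h hs]
    simp [SgnSet, asymm (neg_neg_of_pos h), neg_neg_of_pos h]

section
variable {n : ℕ} (G : SimpleGraph (Fin n)) [DecidableRel G.Adj]

lemma key_sum (z : Fin n → Fin n → ℝ) (p q : Fin n → Prop)
    [DecidablePred p] [DecidablePred q] :
    ∑ i ∈ univ.filter p, ∑ j ∈ (G.neighborFinset i).filter q, z i j
      = ∑ i : Fin n, ∑ j : Fin n, if p i ∧ q j ∧ G.Adj i j then z i j else 0 := by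
  rw [Finset.sum_filter]
  refine Finset.sum_congr rfl fun i _ => ?_
  by_cases hp : p i
  · simp only [hp, if_true, true_and]
    have he : (G.neighborFinset i).filter q = univ.filter (fun j => q j ∧ G.Adj i j) := by
      ext j; simp [SimpleGraph.mem_neighborFinset, and_comm]
    rw [he, Finset.sum_filter]
  · simp [hp]

lemma zsum_antisymm (z : Fin n → Fin n → ℝ)
    (hz : ∀ i j, G.Adj i j → z j i = - z i j) (p q : Fin n → Prop)
    [DecidablePred p] [DecidablePred q] :
    ∑ i ∈ univ.filter p, ∑ j ∈ (G.neighborFinset i).filter q, z i j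
      = - ∑ i ∈ univ.filter q, ∑ j ∈ (G.neighborFinset i).filter p, z i j := by
  rw [key_sum, key_sum]
  rw [show (∑ i : Fin n, ∑ j : Fin n, if q i ∧ p j ∧ G.Adj i j then z i j else 0)
      = ∑ i : Fin n, ∑ j : Fin n, if q j ∧ p i ∧ G.Adj j i then z j i else 0 from
    Finset.sum_comm]
  rw [← Finset.sum_neg_distrib]
  refine Finset.sum_congr rfl fun i _ => ?_
  rw [← Finset.sum_neg_distrib]
  refine Finset.sum_congr rfl fun j _ => ?_
  by_cases ha : G.Adj i j
  · have ha' : G.Adj j i := ha.symm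
    by_cases hp : p i <;> by_cases hq : q j <;> simp [ha, ha', hp, hq, hz i j ha]
  · have ha' : ¬ G.Adj j i := fun hc => ha hc.symm
    simp [ha, ha']

lemma zsum_self_eq_zero (z : Fin n → Fin n → ℝ)
    (hz : ∀ i j, G.Adj i j → z j i = - z i j) (p : Fin n → Prop) [DecidablePred p] :
    ∑ i ∈ univ.filter p, ∑ j ∈ (G.neighborFinset i).filter p, z i j = 0 := by
  have := zsum_antisymm G z hz p p
  linarith

lemma card_swap (p q : Fin n → Prop) [DecidablePred p] [DecidablePred q] :
    ∑ i ∈ univ.filter p, (((G.neighborFinset i).filter q).card : ℝ)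
      = ∑ i ∈ univ.filter q, (((G.neighborFinset i).filter p).card : ℝ) := by
  have h1 : ∑ i ∈ univ.filter p, (((G.neighborFinset i).filter q).card : ℝ)
      = ∑ i ∈ univ.filter p, ∑ j ∈ (G.neighborFinset i).filter q, (1:ℝ) :=
    Finset.sum_congr rfl fun i _ => by simp
  have h2 : ∑ i ∈ univ.filter q, (((G.neighborFinset i).filter p).card : ℝ)
      = ∑ i ∈ univ.filter q, ∑ j ∈ (G.neighborFinset i).filter p, (1:ℝ) :=
    Finset.sum_congr rfl fun i _ => by simp
  rw [h1, h2, key_sum, key_sum]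
  rw [Finset.sum_comm]
  refine Finset.sum_congr rfl fun i _ => Finset.sum_congr rfl fun j _ => ?_
  by_cases ha : G.Adj i j
  · have ha' : G.Adj j i := ha.symm
    by_cases hp : p i <;> by_cases hq : q j <;> simp [ha, ha', hp, hq, and_comm]
  · have ha' : ¬ G.Adj j i := fun hc => ha hc.symm
    simp [ha, ha']

lemma trisplit (x : Fin n → ℝ) (s : Finset (Fin n)) (f : Fin n → ℝ) :
    ∑ j ∈ s, f j
      = (∑ j ∈ s.filter (fun j => 0 < x j), f j)
        + (∑ j ∈ s.filter (fun j => x j = 0), f j)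
        + (∑ j ∈ s.filter (fun j => x j < 0), f j) := by
  classical
  rw [← Finset.sum_filter_add_sum_filter_not s (fun j => 0 < x j) f]
  have h2 := Finset.sum_filter_add_sum_filter_not
    (s.filter (fun j => ¬ 0 < x j)) (fun j => x j = 0) f
  have e1 : (s.filter (fun j => ¬ 0 < x j)).filter (fun j => x j = 0)
      = s.filter (fun j => x j = 0) := by
    ext j
    simp only [mem_filter, not_lt]
    constructor
    · rintro ⟨⟨a, _⟩, c⟩; exact ⟨a, c⟩
    · rintro ⟨a, c⟩; exact ⟨⟨a, le_of_eq c⟩, c⟩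
  have e2 : (s.filter (fun j => ¬ 0 < x j)).filter (fun j => ¬ x j = 0)
      = s.filter (fun j => x j < 0) := by
    ext j
    simp only [mem_filter, not_lt]
    constructor
    · rintro ⟨⟨a, b⟩, c⟩; exact ⟨a, lt_of_le_of_ne b c⟩
    · rintro ⟨a, c⟩; exact ⟨⟨a, le_of_lt c⟩, ne_of_lt c⟩
  rw [e1, e2] at h2
  linarith

end

lemma isEigenpair_neg {n : ℕ} (G : SimpleGraph (Fin n)) [DecidableRel G.Adj]
    {μ : ℝ} {x : Fin n → ℝ} (h : IsEigenpair G μ x) :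
    IsEigenpair G μ (fun i => - x i) := by
  obtain ⟨hnorm, z, hzmem, hzanti, hsum⟩ := h
  refine ⟨by simpa using hnorm, fun i j => - z i j, ?_, ?_, ?_⟩
  · intro i j hij
    have := neg_mem_sgnSet (hzmem i j hij)
    simpa [neg_sub, sub_eq_add_neg, add_comm] using this
  · intro i j hij
    simp [hzanti i j hij]
  · intro i
    obtain ⟨s, hs, he⟩ := hsum i
    refine ⟨-s, neg_mem_sgnSet hs, ?_⟩
    rw [Finset.sum_neg_distrib, he]; ring

lemma upper_aux {n : ℕ} (G : SimpleGraph (Fin n)) [DecidableRel G.Adj]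
    (hdeg : ∀ v, 0 < G.degree v) (hn : 2 ≤ n)
    (μ : ℝ) (x : Fin n → ℝ) (h : IsEigenpair G μ x) (h1 : μ < 1)
    (hex : ∃ i, 0 < x i) :
    μ ≤ ((n : ℝ) - 2) / ((n : ℝ) - 1) := by
  classical
  obtain ⟨hnorm, z, hzmem, hzanti, hsum⟩ := h
  choose s hsmem hseq using hsum
  set P := univ.filter (fun i => 0 < x i) with hPdef
  have hveq : ∀ i, 0 < x i → ∑ j ∈ G.neighborFinset i, z i j = μ * (G.degree i : ℝ) := by
    intro i hi
    rw [hseq i, mem_sgnSet_pos hi (hsmem i), mul_one]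
  have hz1 : ∀ i j, 0 < x i → ¬ 0 < x j → G.Adj i j → z i j = 1 := by
    intro i j hi hj ha
    exact mem_sgnSet_pos (by linarith [not_lt.mp hj] : 0 < x i - x j) (hzmem i j ha)
  set A : Fin n → ℕ := fun i => ((G.neighborFinset i).filter (fun j => 0 < x j)).card with hAdef
  set B : Fin n → ℕ := fun i => ((G.neighborFinset i).filter (fun j => ¬ 0 < x j)).card with hBdef
  have hAB : ∀ i, A i + B i = G.degree i := by
    intro i
    rw [hAdef, hBdef]
    simp only
    rw [Finset.card_filter_add_card_filter_not]
    exact G.card_neighborFinset_eq_degree i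
  have hsplit : ∀ i, 0 < x i →
      (∑ j ∈ (G.neighborFinset i).filter (fun j => 0 < x j), z i j) + (B i : ℝ)
        = μ * (G.degree i : ℝ) := by
    intro i hi
    have e1 : ∑ j ∈ (G.neighborFinset i).filter (fun j => ¬ 0 < x j), z i j = (B i : ℝ) := by
      rw [Finset.sum_congr rfl (fun j hj => hz1 i j hi (mem_filter.mp hj).2
        ((SimpleGraph.mem_neighborFinset G i j).mp (mem_filter.mp hj).1))]
      simp [hBdef]
    rw [← hveq i hi, ← Finset.sum_filter_add_sum_filter_not (G.neighborFinset i)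
      (fun j => 0 < x j) (z i), e1]
  have hA1 : ∀ i, 0 < x i → 1 ≤ A i := by
    intro i hi
    by_contra hA
    have hA0 : A i = 0 := by omega
    have hfe : (G.neighborFinset i).filter (fun j => 0 < x j) = ∅ := card_eq_zero.mp hA0
    have h2 := hsplit i hi
    rw [hfe] at h2
    simp only [Finset.sum_empty, zero_add] at h2
    have hB : B i = G.degree i := by have := hAB i; omega
    have hd : (0:ℝ) < (G.degree i : ℝ) := by exact_mod_cast hdeg i
    have hB' : (B i : ℝ) = (G.degree i : ℝ) := by exact_mod_cast hB
    rw [hB'] at h2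
    nlinarith
  have EP : μ * ∑ i ∈ P, (G.degree i : ℝ) = ∑ i ∈ P, (B i : ℝ) := by
    rw [Finset.mul_sum]
    have h0 : ∑ i ∈ P, ∑ j ∈ (G.neighborFinset i).filter (fun j => 0 < x j), z i j = 0 :=
      zsum_self_eq_zero G z hzanti (fun j => 0 < x j)
    calc ∑ i ∈ P, μ * (G.degree i : ℝ)
        = ∑ i ∈ P, ((∑ j ∈ (G.neighborFinset i).filter (fun j => 0 < x j), z i j) + (B i : ℝ)) := by
          refine Finset.sum_congr rfl fun i hi => ?_
          exact (hsplit i (mem_filter.mp hi).2).symm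
      _ = (∑ i ∈ P, ∑ j ∈ (G.neighborFinset i).filter (fun j => 0 < x j), z i j)
            + ∑ i ∈ P, (B i : ℝ) := Finset.sum_add_distrib
      _ = ∑ i ∈ P, (B i : ℝ) := by rw [h0, zero_add]
  have hdle : ∀ i, G.degree i ≤ n - 1 := by
    intro i
    have := G.degree_lt_card_verts i
    rw [Fintype.card_fin] at this
    omega
  have hBleA : ∀ i, 0 < x i → (B i : ℝ) ≤ ((n : ℝ) - 2) * (A i : ℝ) := by
    intro i hi
    have h1' : 1 ≤ A i := hA1 i hi
    have h2' : A i + B i ≤ n - 1 := (hAB i).le.trans (hdle i)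
    have h3' : B i ≤ (n - 2) * A i := by
      have hbn : B i ≤ n - 2 := by omega
      calc B i ≤ n - 2 := hbn
        _ ≤ (n - 2) * A i := Nat.le_mul_of_pos_right _ h1'
    calc (B i : ℝ) ≤ ((n - 2 : ℕ) : ℝ) * (A i : ℝ) := by exact_mod_cast h3'
      _ = ((n : ℝ) - 2) * (A i : ℝ) := by
          rw [Nat.cast_sub hn]; norm_num
  obtain ⟨i0, hi0⟩ := hex
  have hi0P : i0 ∈ P := by simp [hPdef, hi0]
  set SA := ∑ i ∈ P, (A i : ℝ) with hSA
  set SB := ∑ i ∈ P, (B i : ℝ) with hSB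
  have hSA1 : 1 ≤ SA := by
    have : (1:ℝ) ≤ (A i0 : ℝ) := by exact_mod_cast hA1 i0 hi0
    calc (1:ℝ) ≤ (A i0 : ℝ) := this
      _ ≤ SA := Finset.single_le_sum (f := fun i => (A i : ℝ)) (fun i _ => by positivity) hi0P
  have hSB0 : 0 ≤ SB := Finset.sum_nonneg fun i _ => by positivity
  have hDel : ∑ i ∈ P, (G.degree i : ℝ) = SA + SB := by
    rw [hSA, hSB, ← Finset.sum_add_distrib]
    refine Finset.sum_congr rfl fun i _ => ?_
    exact_mod_cast (hAB i).symm
  have hBle' : SB ≤ ((n : ℝ) - 2) * SA := by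
    rw [hSA, hSB, Finset.mul_sum]
    refine Finset.sum_le_sum fun i hi => ?_
    exact hBleA i (mem_filter.mp hi).2
  have hEP' : μ * (SA + SB) = SB := by rw [← hDel]; exact EP
  have hn2 : (2:ℝ) ≤ (n:ℝ) := by exact_mod_cast hn
  have hne1 : (0:ℝ) < (n:ℝ) - 1 := by linarith
  have hpos : 0 < SA + SB := by linarith
  have key2 : μ * ((n:ℝ) - 1) ≤ (n:ℝ) - 2 := by
    have h6 : μ * ((n:ℝ) - 1) * (SA + SB) ≤ ((n:ℝ) - 2) * (SA + SB) := by
      have : μ * ((n:ℝ) - 1) * (SA + SB) = ((n:ℝ) - 1) * (μ * (SA + SB)) := by ring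
      rw [this, hEP']
      nlinarith
    exact le_of_mul_le_mul_right h6 hpos
  rw [le_div_iff₀ hne1]
  exact key2

lemma key3_abstract (a b c : ℕ) (h : 1 ≤ a + c) :
    (2:ℝ) ≤ ((a:ℝ) + c) + |(b:ℝ) - (a:ℝ)| + ((b:ℝ) + c) := by
  rcases le_total (b : ℝ) (a : ℝ) with hc | hc
  · rw [abs_of_nonpos (by linarith)]
    have h1' : (1:ℝ) ≤ (a:ℝ) + (c:ℝ) := by exact_mod_cast h
    have hb : (0:ℝ) ≤ (b:ℝ) := Nat.cast_nonneg b
    have hcc : (0:ℝ) ≤ (c:ℝ) := Nat.cast_nonneg c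
    linarith
  · rw [abs_of_nonneg (by linarith)]
    have hab : a ≤ b := by exact_mod_cast hc
    have h1' : 1 ≤ b + c := by omega
    have h1'' : (1:ℝ) ≤ (b:ℝ) + (c:ℝ) := by exact_mod_cast h1'
    have ha : (0:ℝ) ≤ (a:ℝ) := Nat.cast_nonneg a
    linarith

lemma lower_aux {n : ℕ} (G : SimpleGraph (Fin n)) [DecidableRel G.Adj]
    (μ : ℝ) (x : Fin n → ℝ) (h : IsEigenpair G μ x) (h0 : 0 < μ)
    (hex : ∃ i, 0 < x i ∧ 0 < G.degree i) :
    2 ≤ μ * ∑ i, (G.degree i : ℝ) := by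
  classical
  obtain ⟨hnorm, z, hzmem, hzanti, hsum⟩ := h
  choose s hsmem hseq using hsum
  set pos : Fin n → Prop := fun j => 0 < x j with hposdef
  set zer : Fin n → Prop := fun j => x j = 0 with hzerdef
  set neg : Fin n → Prop := fun j => x j < 0 with hnegdef
  set VP := univ.filter pos with hVP
  set VZ := univ.filter zer with hVZ
  set VN := univ.filter neg with hVN
  set an : ℕ := ∑ i ∈ VP, ((G.neighborFinset i).filter zer).card with han
  set cn : ℕ := ∑ i ∈ VP, ((G.neighborFinset i).filter neg).card with hcn
  set bn : ℕ := ∑ i ∈ VN, ((G.neighborFinset i).filter zer).card with hbn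
  -- decompose each vertex sum into three pieces
  have hsplit : ∀ i, ∑ j ∈ G.neighborFinset i, z i j
      = (∑ j ∈ (G.neighborFinset i).filter pos, z i j)
        + (∑ j ∈ (G.neighborFinset i).filter zer, z i j)
        + (∑ j ∈ (G.neighborFinset i).filter neg, z i j) :=
    fun i => trisplit x (G.neighborFinset i) (z i)
  -- constant-value sums
  have hconst : ∀ (p q : Fin n → Prop) [DecidablePred p] [DecidablePred q] (c : ℝ),
      (∀ i j, p i → q j → G.Adj i j → z i j = c) →
      ∀ i ∈ univ.filter p, ∑ j ∈ (G.neighborFinset i).filter q, z i j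
        = c * (((G.neighborFinset i).filter q).card : ℝ) := by
    intro p q _ _ c hc i hi
    rw [Finset.sum_congr rfl (fun j hj => hc i j (mem_filter.mp hi).2 (mem_filter.mp hj).2
      ((SimpleGraph.mem_neighborFinset G i j).mp (mem_filter.mp hj).1))]
    rw [Finset.sum_const, nsmul_eq_mul, mul_comm]
  -- equation over VP
  have EP : μ * ∑ i ∈ VP, (G.degree i : ℝ) = (an : ℝ) + (cn : ℝ) := by
    have hzpz : ∀ i j, pos i → zer j → G.Adj i j → z i j = 1 := fun i j hi hj ha =>
      mem_sgnSet_pos (by simp only [hzerdef] at hj; simp only [hposdef] at hi; linarith) (hzmem i j ha)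
    have hzpn : ∀ i j, pos i → neg j → G.Adj i j → z i j = 1 := fun i j hi hj ha =>
      mem_sgnSet_pos (by simp only [hnegdef] at hj; simp only [hposdef] at hi; linarith) (hzmem i j ha)
    calc μ * ∑ i ∈ VP, (G.degree i : ℝ)
        = ∑ i ∈ VP, μ * (G.degree i : ℝ) := Finset.mul_sum _ _ _
      _ = ∑ i ∈ VP, ∑ j ∈ G.neighborFinset i, z i j := by
          refine Finset.sum_congr rfl fun i hi => ?_
          have hxi : 0 < x i := (mem_filter.mp hi).2
          rw [hseq i, mem_sgnSet_pos hxi (hsmem i), mul_one]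
      _ = (∑ i ∈ VP, ∑ j ∈ (G.neighborFinset i).filter pos, z i j)
            + (∑ i ∈ VP, ∑ j ∈ (G.neighborFinset i).filter zer, z i j)
            + (∑ i ∈ VP, ∑ j ∈ (G.neighborFinset i).filter neg, z i j) := by
          rw [Finset.sum_congr rfl (fun i _ => hsplit i), Finset.sum_add_distrib,
            Finset.sum_add_distrib]
      _ = 0 + (∑ i ∈ VP, (((G.neighborFinset i).filter zer).card : ℝ))
            + (∑ i ∈ VP, (((G.neighborFinset i).filter neg).card : ℝ)) := by
          have ezer : ∑ i ∈ VP, ∑ j ∈ (G.neighborFinset i).filter zer, z i j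
              = ∑ i ∈ VP, (((G.neighborFinset i).filter zer).card : ℝ) :=
            Finset.sum_congr rfl fun i hi => by rw [hconst pos zer 1 hzpz i hi, one_mul]
          have eneg : ∑ i ∈ VP, ∑ j ∈ (G.neighborFinset i).filter neg, z i j
              = ∑ i ∈ VP, (((G.neighborFinset i).filter neg).card : ℝ) :=
            Finset.sum_congr rfl fun i hi => by rw [hconst pos neg 1 hzpn i hi, one_mul]
          have epos := zsum_self_eq_zero G z hzanti pos
          rw [← hVP] at epos
          rw [ezer, eneg, epos]
      _ = (an : ℝ) + (cn : ℝ) := by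
          rw [zero_add, han, hcn, Nat.cast_sum, Nat.cast_sum]
  -- equation over VN
  have EN : μ * ∑ i ∈ VN, (G.degree i : ℝ) = (bn : ℝ) + (cn : ℝ) := by
    have hznz : ∀ i j, neg i → zer j → G.Adj i j → z i j = -1 := fun i j hi hj ha =>
      mem_sgnSet_neg (by simp only [hzerdef] at hj; simp only [hnegdef] at hi; linarith) (hzmem i j ha)
    have hznp : ∀ i j, neg i → pos j → G.Adj i j → z i j = -1 := fun i j hi hj ha =>
      mem_sgnSet_neg (by simp only [hposdef] at hj; simp only [hnegdef] at hi; linarith) (hzmem i j ha)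
    have hswap : ∑ i ∈ VN, (((G.neighborFinset i).filter pos).card : ℝ)
        = ∑ i ∈ VP, (((G.neighborFinset i).filter neg).card : ℝ) := card_swap G neg pos
    have main : - (μ * ∑ i ∈ VN, (G.degree i : ℝ)) = - (bn : ℝ) - (cn : ℝ) := by
      calc - (μ * ∑ i ∈ VN, (G.degree i : ℝ))
          = ∑ i ∈ VN, μ * (G.degree i : ℝ) * (-1) := by
            rw [Finset.mul_sum, ← Finset.sum_neg_distrib]
            exact Finset.sum_congr rfl fun i _ => by ring
        _ = ∑ i ∈ VN, ∑ j ∈ G.neighborFinset i, z i j := by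
            refine Finset.sum_congr rfl fun i hi => ?_
            have hxi : x i < 0 := (mem_filter.mp hi).2
            rw [hseq i, mem_sgnSet_neg hxi (hsmem i)]
        _ = (∑ i ∈ VN, ∑ j ∈ (G.neighborFinset i).filter pos, z i j)
              + (∑ i ∈ VN, ∑ j ∈ (G.neighborFinset i).filter zer, z i j)
              + (∑ i ∈ VN, ∑ j ∈ (G.neighborFinset i).filter neg, z i j) := by
            rw [Finset.sum_congr rfl (fun i _ => hsplit i), Finset.sum_add_distrib,
              Finset.sum_add_distrib]
        _ = (∑ i ∈ VN, (-1) * (((G.neighborFinset i).filter pos).card : ℝ))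
              + (∑ i ∈ VN, (-1) * (((G.neighborFinset i).filter zer).card : ℝ)) + 0 := by
            have epos : ∑ i ∈ VN, ∑ j ∈ (G.neighborFinset i).filter pos, z i j
                = ∑ i ∈ VN, (-1) * (((G.neighborFinset i).filter pos).card : ℝ) :=
              Finset.sum_congr rfl fun i hi => hconst neg pos (-1) hznp i hi
            have ezer : ∑ i ∈ VN, ∑ j ∈ (G.neighborFinset i).filter zer, z i j
                = ∑ i ∈ VN, (-1) * (((G.neighborFinset i).filter zer).card : ℝ) :=
              Finset.sum_congr rfl fun i hi => hconst neg zer (-1) hznz i hi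
            have eneg := zsum_self_eq_zero G z hzanti neg
            rw [← hVN] at eneg
            rw [epos, ezer, eneg]
        _ = - (bn : ℝ) - (cn : ℝ) := by
            rw [add_zero]
            have e1 : ∑ i ∈ VN, (-1) * (((G.neighborFinset i).filter pos).card : ℝ)
                = - (cn : ℝ) := by
              have hh : ∀ i ∈ VN, (-1) * (((G.neighborFinset i).filter pos).card : ℝ)
                  = -(((G.neighborFinset i).filter pos).card : ℝ) := fun i _ => by ring
              rw [Finset.sum_congr rfl hh, Finset.sum_neg_distrib, hswap, hcn, Nat.cast_sum]
            have e2 : ∑ i ∈ VN, (-1) * (((G.neighborFinset i).filter zer).card : ℝ)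
                = - (bn : ℝ) := by
              have : ∀ i ∈ VN, (-1) * (((G.neighborFinset i).filter zer).card : ℝ)
                  = -(((G.neighborFinset i).filter zer).card : ℝ) := fun i _ => by ring
              rw [Finset.sum_congr rfl this, Finset.sum_neg_distrib, hbn, Nat.cast_sum]
            rw [e1, e2]
            ring
    linarith
  -- inequality over VZ
  have EZ : |(bn : ℝ) - (an : ℝ)| ≤ μ * ∑ i ∈ VZ, (G.degree i : ℝ) := by
    have hzzp : ∀ i j, zer i → pos j → G.Adj i j → z i j = -1 := fun i j hi hj ha =>
      mem_sgnSet_neg (by simp only [hposdef] at hj; simp only [hzerdef] at hi; linarith) (hzmem i j ha)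
    have hzzn : ∀ i j, zer i → neg j → G.Adj i j → z i j = 1 := fun i j hi hj ha =>
      mem_sgnSet_pos (by simp only [hnegdef] at hj; simp only [hzerdef] at hi; linarith) (hzmem i j ha)
    have hswapa : ∑ i ∈ VZ, (((G.neighborFinset i).filter pos).card : ℝ)
        = ∑ i ∈ VP, (((G.neighborFinset i).filter zer).card : ℝ) := card_swap G zer pos
    have hswapb : ∑ i ∈ VZ, (((G.neighborFinset i).filter neg).card : ℝ)
        = ∑ i ∈ VN, (((G.neighborFinset i).filter zer).card : ℝ) := card_swap G zer neg
    have main : ∑ i ∈ VZ, ∑ j ∈ G.neighborFinset i, z i j = (bn : ℝ) - (an : ℝ) := by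
      calc ∑ i ∈ VZ, ∑ j ∈ G.neighborFinset i, z i j
          = (∑ i ∈ VZ, ∑ j ∈ (G.neighborFinset i).filter pos, z i j)
              + (∑ i ∈ VZ, ∑ j ∈ (G.neighborFinset i).filter zer, z i j)
              + (∑ i ∈ VZ, ∑ j ∈ (G.neighborFinset i).filter neg, z i j) := by
            rw [Finset.sum_congr rfl (fun i _ => hsplit i), Finset.sum_add_distrib,
              Finset.sum_add_distrib]
        _ = (∑ i ∈ VZ, (-1) * (((G.neighborFinset i).filter pos).card : ℝ))
              + 0 + (∑ i ∈ VZ, (1:ℝ) * (((G.neighborFinset i).filter neg).card : ℝ)) := by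
            have epos : ∑ i ∈ VZ, ∑ j ∈ (G.neighborFinset i).filter pos, z i j
                = ∑ i ∈ VZ, (-1) * (((G.neighborFinset i).filter pos).card : ℝ) :=
              Finset.sum_congr rfl fun i hi => hconst zer pos (-1) hzzp i hi
            have eneg2 : ∑ i ∈ VZ, ∑ j ∈ (G.neighborFinset i).filter neg, z i j
                = ∑ i ∈ VZ, (1:ℝ) * (((G.neighborFinset i).filter neg).card : ℝ) :=
              Finset.sum_congr rfl fun i hi => hconst zer neg 1 hzzn i hi
            have ezer := zsum_self_eq_zero G z hzanti zer
            rw [← hVZ] at ezer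
            rw [epos, eneg2, ezer]
        _ = (bn : ℝ) - (an : ℝ) := by
            have e1 : ∑ i ∈ VZ, (-1) * (((G.neighborFinset i).filter pos).card : ℝ)
                = - (an : ℝ) := by
              have : ∀ i ∈ VZ, (-1) * (((G.neighborFinset i).filter pos).card : ℝ)
                  = -(((G.neighborFinset i).filter pos).card : ℝ) := fun i _ => by ring
              rw [Finset.sum_congr rfl this, Finset.sum_neg_distrib, hswapa, han, Nat.cast_sum]
            have e2 : ∑ i ∈ VZ, (1:ℝ) * (((G.neighborFinset i).filter neg).card : ℝ)
                = (bn : ℝ) := by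
              have : ∀ i ∈ VZ, (1:ℝ) * (((G.neighborFinset i).filter neg).card : ℝ)
                  = (((G.neighborFinset i).filter neg).card : ℝ) := fun i _ => by ring
              rw [Finset.sum_congr rfl this, hswapb, hbn, Nat.cast_sum]
            rw [e1, e2]
            ring
    rw [← main]
    calc |∑ i ∈ VZ, ∑ j ∈ G.neighborFinset i, z i j|
        ≤ ∑ i ∈ VZ, |∑ j ∈ G.neighborFinset i, z i j| := Finset.abs_sum_le_sum_abs _ _
      _ ≤ ∑ i ∈ VZ, μ * (G.degree i : ℝ) := by
          refine Finset.sum_le_sum fun i hi => ?_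
          rw [hseq i, abs_mul, abs_mul]
          have hd0 : (0:ℝ) ≤ (G.degree i : ℝ) := by positivity
          have hs1 : |s i| ≤ 1 := abs_le_one_of_mem_sgnSet (hsmem i)
          rw [abs_of_pos h0, Nat.abs_cast]
          calc μ * (G.degree i : ℝ) * |s i| ≤ μ * (G.degree i : ℝ) * 1 := by
                apply mul_le_mul_of_nonneg_left hs1
                positivity
            _ = μ * (G.degree i : ℝ) := mul_one _
      _ = μ * ∑ i ∈ VZ, (G.degree i : ℝ) := (Finset.mul_sum _ _ _).symm
  -- total degree decomposition
  have hd : ∑ i, (G.degree i : ℝ)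
      = (∑ i ∈ VP, (G.degree i : ℝ)) + (∑ i ∈ VZ, (G.degree i : ℝ))
        + (∑ i ∈ VN, (G.degree i : ℝ)) :=
    trisplit x univ (fun i => (G.degree i : ℝ))
  -- an + cn ≥ 1
  have hac1 : 1 ≤ an + cn := by
    obtain ⟨i0, hx0, hd0⟩ := hex
    have hi0 : i0 ∈ VP := by simp [hVP, hposdef, hx0]
    have hdel : (1:ℝ) ≤ ∑ i ∈ VP, (G.degree i : ℝ) := by
      have h1' : (1:ℝ) ≤ (G.degree i0 : ℝ) := by exact_mod_cast hd0
      calc (1:ℝ) ≤ (G.degree i0 : ℝ) := h1'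
        _ ≤ ∑ i ∈ VP, (G.degree i : ℝ) :=
            Finset.single_le_sum (f := fun i => (G.degree i : ℝ)) (fun i _ => by positivity) hi0
    have : (0:ℝ) < (an : ℝ) + (cn : ℝ) := by rw [← EP]; positivity
    by_contra hc
    push_neg at hc
    have han0 : an = 0 := by omega
    have hcn0 : cn = 0 := by omega
    rw [han0, hcn0] at this
    norm_num at this
  -- final combination
  have hmul : μ * ∑ i, (G.degree i : ℝ)
      = ((an:ℝ) + cn) + (μ * ∑ i ∈ VZ, (G.degree i : ℝ)) + ((bn:ℝ) + cn) := by
    rw [hd]; rw [mul_add, mul_add, EP, EN]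
  have key3 := key3_abstract an bn cn hac1
  linarith

/-- Theorem 5.6: if `G` is connected, `n ≥ 2`, and `μ` is an eigenvalue
with `0 < μ < 1`, then `2/d ≤ μ ≤ (n−2)/(n−1)`. -/
theorem eigenvalue_bounds {n : ℕ} (G : SimpleGraph (Fin n)) [DecidableRel G.Adj]
    (hconn : G.Connected) (hn : 2 ≤ n)
    (μ : ℝ) (x : Fin n → ℝ) (h : IsEigenpair G μ x) (h0 : 0 < μ) (h1 : μ < 1) :
    2 / (∑ i, (G.degree i : ℝ)) ≤ μ ∧ μ ≤ ((n : ℝ) - 2) / ((n : ℝ) - 1) := by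
  classical
  have hdeg : ∀ v, 0 < G.degree v := by
    intro v
    rw [G.degree_pos_iff_exists_adj]
    obtain ⟨w, hw⟩ : ∃ w : Fin n, w ≠ v := by
      have hcard : 1 < Fintype.card (Fin n) := by rw [Fintype.card_fin]; omega
      exact Fintype.exists_ne_of_one_lt_card hcard v
    obtain ⟨p⟩ := hconn.preconnected v w
    cases p with
    | nil => exact absurd rfl hw
    | cons hadj _ => exact ⟨_, hadj⟩
  have hd_pos : (0:ℝ) < ∑ i, (G.degree i : ℝ) := by
    have i0 : Fin n := ⟨0, by omega⟩
    calc (0:ℝ) < (G.degree i0 : ℝ) := by exact_mod_cast hdeg i0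
      _ ≤ ∑ i, (G.degree i : ℝ) :=
        Finset.single_le_sum (f := fun i => (G.degree i : ℝ)) (fun i _ => by positivity)
          (mem_univ i0)
  have hxne : ∃ i, x i ≠ 0 := by
    by_contra hc
    push_neg at hc
    have h1' := h.1
    simp only [hc, abs_zero, mul_zero, Finset.sum_const_zero] at h1'
    norm_num at h1'
  obtain ⟨i0, hi0⟩ := hxne
  obtain ⟨x', hx', hex⟩ : ∃ x', IsEigenpair G μ x' ∧ 0 < x' i0 := by
    rcases hi0.lt_or_gt with hneg | hpos
    · exact ⟨fun i => - x i, isEigenpair_neg G h, by simpa using hneg⟩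
    · exact ⟨x, h, hpos⟩
  constructor
  · rw [div_le_iff₀ hd_pos]
    have := lower_aux G μ x' hx' h0 ⟨i0, hex, hdeg i0⟩
    linarith
  · exact upper_aux G hdeg hn μ x' hx' h1 ⟨i0, hex⟩
end

section
/- Let x ∈ X and μ ∈ ℝ, and suppose there exist reals z_{ij} for i ∼ j with z_{ij} ∈ Sgn(x_i − x_j) and z_{ji} = −z_{ij}, such that ∑_{j ∼ i} z_{ij} = μ d_i sgn(x_i) for every vertex i with x_i ≠ 0. Then μ = I(x). -/
open Finset

lemma sgnSet_mul {t zz : ℝ} (h : zz ∈ SgnSet t) : t * zz = |t| := by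
  unfold SgnSet at h
  split_ifs at h with h1 h2
  · simp only [Set.mem_singleton_iff] at h
    rw [h, abs_of_pos h1, mul_one]
  · simp only [Set.mem_singleton_iff] at h
    rw [h, abs_of_neg h2]; ring
  · have ht : t = 0 := le_antisymm (not_lt.1 h1) (not_lt.1 h2)
    simp [ht]

/-- Lemma 5.7: if `x ∈ X` and there are `z_{ij} ∈ Sgn(x_i − x_j)` with
`z_{ji} = −z_{ij}` and `∑_{j∼i} z_{ij} = μ d_i sgn(x_i)` for every `i` with `x_i ≠ 0`,
then `μ = I(x)`. -/
theorem eigenvalue_eq_energy_of_support {n : ℕ} (G : SimpleGraph (Fin n)) [DecidableRel G.Adj]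
    (μ : ℝ) (x : Fin n → ℝ) (hX : ∑ i, (G.degree i : ℝ) * |x i| = 1)
    (z : Fin n → Fin n → ℝ)
    (hz : ∀ i j, G.Adj i j → z i j ∈ SgnSet (x i - x j))
    (hanti : ∀ i j, G.Adj i j → z j i = - z i j)
    (heq : ∀ i, x i ≠ 0 →
      ∑ j ∈ G.neighborFinset i, z i j = μ * (G.degree i : ℝ) * Real.sign (x i)) :
    μ = energy G x := by
  have key : ∀ i, μ * (G.degree i : ℝ) * |x i| = x i * ∑ j ∈ G.neighborFinset i, z i j := by
    intro i
    by_cases h : x i = 0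
    · simp [h]
    · rw [heq i h]
      have hs : x i * Real.sign (x i) = |x i| := by
        rcases lt_trichotomy (x i) 0 with h' | h' | h'
        · rw [Real.sign_of_neg h', abs_of_neg h']; ring
        · exact absurd h' h
        · rw [Real.sign_of_pos h', abs_of_pos h']; ring
      calc μ * (G.degree i : ℝ) * |x i|
          = μ * (G.degree i : ℝ) * (x i * Real.sign (x i)) := by rw [hs]
        _ = x i * (μ * (G.degree i : ℝ) * Real.sign (x i)) := by ring
  have hmu : μ = ∑ i, ∑ j ∈ G.neighborFinset i, x i * z i j := by
    calc μ = μ * ∑ i, (G.degree i : ℝ) * |x i| := by rw [hX, mul_one]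
      _ = ∑ i, μ * (G.degree i : ℝ) * |x i| := by rw [Finset.mul_sum]; ring_nf
      _ = ∑ i, x i * ∑ j ∈ G.neighborFinset i, z i j := by
            exact Finset.sum_congr rfl fun i _ => key i
      _ = ∑ i, ∑ j ∈ G.neighborFinset i, x i * z i j := by
            exact Finset.sum_congr rfl fun i _ => Finset.mul_sum _ _ _
  have hfilter : ∀ f : Fin n → Fin n → ℝ,
      ∑ i, ∑ j ∈ G.neighborFinset i, f i j
        = ∑ i, ∑ j, if G.Adj i j then f i j else 0 := by
    intro f
    refine Finset.sum_congr rfl fun i _ => ?_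
    rw [SimpleGraph.neighborFinset_eq_filter, Finset.sum_filter]
  have hswap : ∑ i, ∑ j ∈ G.neighborFinset i, x i * z i j
      = ∑ i, ∑ j ∈ G.neighborFinset i, (-(x j * z i j)) := by
    rw [hfilter, hfilter, Finset.sum_comm]
    refine Finset.sum_congr rfl fun i _ => Finset.sum_congr rfl fun j _ => ?_
    by_cases h : G.Adj i j
    · rw [if_pos (G.adj_symm h), if_pos h, hanti i j h]; ring
    · rw [if_neg (fun h' => h (G.adj_symm h')), if_neg h]
  have habs : ∑ i, ∑ j ∈ G.neighborFinset i, |x i - x j|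
      = 2 * ∑ i, ∑ j ∈ G.neighborFinset i, x i * z i j := by
    have : ∀ i, ∀ j ∈ G.neighborFinset i, |x i - x j| = x i * z i j + (-(x j * z i j)) := by
      intro i j hj
      have hadj : G.Adj i j := (G.mem_neighborFinset i j).1 hj
      have := sgnSet_mul (hz i j hadj)
      nlinarith [this]
    calc ∑ i, ∑ j ∈ G.neighborFinset i, |x i - x j|
        = ∑ i, ∑ j ∈ G.neighborFinset i, (x i * z i j + (-(x j * z i j))) :=
          Finset.sum_congr rfl fun i _ => Finset.sum_congr rfl (this i)
      _ = ∑ i, ∑ j ∈ G.neighborFinset i, x i * z i j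
          + ∑ i, ∑ j ∈ G.neighborFinset i, (-(x j * z i j)) := by
            rw [← Finset.sum_add_distrib]
            exact Finset.sum_congr rfl fun i _ => Finset.sum_add_distrib
      _ = 2 * ∑ i, ∑ j ∈ G.neighborFinset i, x i * z i j := by rw [← hswap]; ring
  rw [hmu, energy, habs]; ring
end

section
/- Let G be connected with n ≥ 2 vertices and let m = min_{x∈π} I(x). Then there exist disjoint subsets D⁺, D⁻ ⊆ V, not both empty, such that the vector ϕ defined by ϕ_i = 1/δ for i ∈ D⁺, ϕ_i = −1/δ for i ∈ D⁻, and ϕ_i = 0 otherwise, where δ = vol(D⁺) + vol(D⁻) > 0, satisfies I(ϕ) = m. -/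
open Finset

/- ### Auxiliary material -/

lemma Aux.abs_split (a b : ℝ) :
    |a - b| = |max a 0 - max b 0| + |max (-a) 0 - max (-b) 0| := by
  rcases le_total 0 a with ha | ha <;> rcases le_total 0 b with hb | hb
  · rw [max_eq_left ha, max_eq_left hb, max_eq_right (neg_nonpos.mpr ha),
      max_eq_right (neg_nonpos.mpr hb)]
    simp
  · rw [max_eq_left ha, max_eq_right hb, max_eq_right (neg_nonpos.mpr ha),
      max_eq_left (neg_nonneg.mpr hb), sub_zero, zero_sub, abs_neg, abs_neg,
      abs_of_nonneg ha, abs_of_nonpos hb, abs_of_nonneg (by linarith)]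
    ring
  · rw [max_eq_right ha, max_eq_left hb, max_eq_left (neg_nonneg.mpr ha),
      max_eq_right (neg_nonpos.mpr hb), zero_sub, sub_zero, abs_neg, abs_neg,
      abs_of_nonpos ha, abs_of_nonneg hb, abs_of_nonpos (by linarith)]
    ring
  · rw [max_eq_right ha, max_eq_right hb, max_eq_left (neg_nonneg.mpr ha),
      max_eq_left (neg_nonneg.mpr hb), sub_self, abs_zero, zero_add,
      neg_sub_neg, abs_sub_comm b a]

section
variable {n : ℕ} (G : SimpleGraph (Fin n)) [DecidableRel G.Adj]

noncomputable def Aux.vol (S : Finset (Fin n)) : ℝ := ∑ i ∈ S, (G.degree i : ℝ)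

noncomputable def Aux.cut (S : Finset (Fin n)) : ℝ :=
  ((univ.filter (fun p : Fin n × Fin n => G.Adj p.1 p.2 ∧ p.1 ∈ S ∧ p.2 ∉ S)).card : ℝ)

lemma Aux.degree_pos (hconn : G.Connected) (hn : 2 ≤ n) (v : Fin n) : 0 < G.degree v := by
  rw [G.degree_pos_iff_exists_adj v]
  obtain ⟨w, hw⟩ := Fintype.exists_ne_of_one_lt_card (by rw [Fintype.card_fin]; omega) v
  obtain ⟨p⟩ := hconn.preconnected v w
  cases p with
  | nil => exact absurd rfl hw
  | cons h _ => exact ⟨_, h⟩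

lemma Aux.cut_eq (S : Finset (Fin n)) :
    Aux.cut G S = ∑ i, ∑ j ∈ G.neighborFinset i, (if i ∈ S ∧ j ∉ S then (1:ℝ) else 0) := by
  rw [Aux.cut, ← Finset.sum_boole, Fintype.sum_prod_type]
  push_cast
  congr 1; ext i
  rw [SimpleGraph.neighborFinset_eq_filter, sum_filter]
  congr 1; ext j
  by_cases h : G.Adj i j <;> simp [h]

lemma Aux.swap_sum (f : Fin n → Fin n → ℝ) :
    ∑ i, ∑ j ∈ G.neighborFinset i, f i j = ∑ i, ∑ j ∈ G.neighborFinset i, f j i := by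
  simp only [SimpleGraph.neighborFinset_eq_filter, sum_filter]
  rw [Finset.sum_comm]
  congr 1; ext i; congr 1; ext j
  congr 1
  exact iff_iff_eq.mp (G.adj_comm j i)

lemma Aux.cut_compl (S : Finset (Fin n)) : Aux.cut G Sᶜ = Aux.cut G S := by
  rw [Aux.cut_eq, Aux.cut_eq,
    Aux.swap_sum G (fun i j => if i ∈ Sᶜ ∧ j ∉ Sᶜ then (1:ℝ) else 0)]
  congr 1; ext i; congr 1; ext j
  by_cases h1 : i ∈ S <;> by_cases h2 : j ∈ S <;> simp [h1, h2]

lemma Aux.energy_nonneg (x : Fin n → ℝ) : 0 ≤ energy G x := by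
  apply mul_nonneg (by norm_num)
  exact Finset.sum_nonneg fun i _ => Finset.sum_nonneg fun j _ => abs_nonneg _

lemma Aux.energy_indicator (S : Finset (Fin n)) (c : ℝ) (hc : 0 ≤ c) :
    energy G (fun i => if i ∈ S then c else 0) = c * Aux.cut G S := by
  have key : ∀ i j : Fin n,
      |(if i ∈ S then c else 0) - (if j ∈ S then c else 0)| =
        c * (if i ∈ S ∧ j ∉ S then (1:ℝ) else 0) +
        c * (if j ∈ S ∧ i ∉ S then (1:ℝ) else 0) := by
    intro i j
    by_cases hi : i ∈ S <;> by_cases hj : j ∈ S <;>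
      simp [hi, hj, abs_of_nonneg hc, abs_of_nonpos (neg_nonpos.mpr hc)]
  rw [energy]
  simp only [key]
  rw [Finset.sum_congr rfl (fun i _ => Finset.sum_add_distrib), Finset.sum_add_distrib]
  rw [Aux.swap_sum G (fun i j => c * (if j ∈ S ∧ i ∉ S then (1:ℝ) else 0))]
  simp only [← Finset.mul_sum]
  rw [← Aux.cut_eq]
  ring

lemma Aux.energy_decomp (y : Fin n → ℝ) (m : ℝ) (hy : ∀ i, 0 ≤ y i)
    (hmin : ∀ i, 0 < y i → m ≤ y i) :
    energy G y = m * Aux.cut G (univ.filter (fun i => 0 < y i)) +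
      energy G (fun i => if 0 < y i then y i - m else 0) := by
  have key : ∀ i j : Fin n,
      |y i - y j| =
        m * (if i ∈ univ.filter (fun i => 0 < y i) ∧ j ∉ univ.filter (fun i => 0 < y i) then (1:ℝ) else 0) +
        m * (if j ∈ univ.filter (fun i => 0 < y i) ∧ i ∉ univ.filter (fun i => 0 < y i) then (1:ℝ) else 0) +
        |(if 0 < y i then y i - m else 0) - (if 0 < y j then y j - m else 0)| := by
    intro i j
    simp only [Finset.mem_filter, Finset.mem_univ, true_and]
    by_cases hi : 0 < y i <;> by_cases hj : 0 < y j
    · simp only [hi, hj, if_true, not_true, and_false, if_neg (fun h : _ ∧ ¬True => h.2 trivial)]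
      rw [show y i - m - (y j - m) = y i - y j by ring]
      simp
    · have hj0 : y j = 0 := le_antisymm (not_lt.mp hj) (hy j)
      simp only [hi, hj, if_true, if_false, not_false_iff, and_true, false_and, and_self,
        mul_one, mul_zero, add_zero, zero_add]
      rw [hj0, sub_zero, sub_zero, abs_of_pos hi, abs_of_nonneg (by linarith [hmin i hi])]
      ring
    · have hi0 : y i = 0 := le_antisymm (not_lt.mp hi) (hy i)
      simp only [hi, hj, if_true, if_false, not_false_iff, and_true, false_and, and_self,
        mul_one, mul_zero, add_zero, zero_add]
      rw [hi0, zero_sub, zero_sub, abs_neg, abs_neg, abs_of_pos hj,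
        abs_of_nonneg (by linarith [hmin j hj])]
      ring
    · have hi0 : y i = 0 := le_antisymm (not_lt.mp hi) (hy i)
      have hj0 : y j = 0 := le_antisymm (not_lt.mp hj) (hy j)
      simp [hi, hj, hi0, hj0]
  rw [energy, energy]
  simp only [key]
  rw [Finset.sum_congr rfl (fun i _ => Finset.sum_add_distrib), Finset.sum_add_distrib]
  rw [Finset.sum_congr rfl (fun i _ => Finset.sum_add_distrib), Finset.sum_add_distrib]
  rw [Aux.swap_sum G (fun i j => m * (if j ∈ univ.filter (fun i => 0 < y i) ∧ i ∉ univ.filter (fun i => 0 < y i) then (1:ℝ) else 0))]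
  simp only [← Finset.mul_sum]
  rw [← Aux.cut_eq]
  ring

lemma Aux.energy_split (x : Fin n → ℝ) :
    energy G x = energy G (fun i => max (x i) 0) + energy G (fun i => max (-x i) 0) := by
  rw [energy, energy, energy, ← mul_add, ← Finset.sum_add_distrib]
  congr 1
  apply Finset.sum_congr rfl
  intro i _
  rw [← Finset.sum_add_distrib]
  exact Finset.sum_congr rfl fun j _ => Aux.abs_split (x i) (x j)

/-- The main induction: layer-cake lower bound for nonnegative vectors supported on
at most half the volume. -/
lemma Aux.key (h : ℝ)
    (hH : ∀ S : Finset (Fin n), S.Nonempty → Aux.vol G S ≤ Aux.vol G univ / 2 →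
      h * Aux.vol G S ≤ Aux.cut G S) :
    ∀ N (y : Fin n → ℝ), (univ.filter (fun i => 0 < y i)).card ≤ N →
      (∀ i, 0 ≤ y i) → Aux.vol G (univ.filter (fun i => 0 < y i)) ≤ Aux.vol G univ / 2 →
      h * ∑ i, (G.degree i : ℝ) * y i ≤ energy G y := by
  intro N
  induction N with
  | zero =>
    intro y hcard hy _
    have hzero : ∀ i, y i = 0 := by
      intro i
      by_contra hne
      have hi : i ∈ univ.filter (fun i => 0 < y i) := by
        simp [lt_of_le_of_ne (hy i) (Ne.symm hne)]
      have := Finset.card_pos.mpr ⟨i, hi⟩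
      omega
    have : ∑ i, (G.degree i : ℝ) * y i = 0 := by
      apply Finset.sum_eq_zero; intro i _; rw [hzero i, mul_zero]
    rw [this, mul_zero]
    exact Aux.energy_nonneg G y
  | succ N ih =>
    intro y hcard hy hvol
    set S := univ.filter (fun i => 0 < y i) with hS
    by_cases hne : S.Nonempty
    case neg =>
      have hzero : ∀ i, y i = 0 := by
        intro i
        by_contra hne'
        exact hne ⟨i, by simp [hS, lt_of_le_of_ne (hy i) (Ne.symm hne')]⟩
      have : ∑ i, (G.degree i : ℝ) * y i = 0 := by
        apply Finset.sum_eq_zero; intro i _; rw [hzero i, mul_zero]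
      rw [this, mul_zero]
      exact Aux.energy_nonneg G y
    case pos =>
      obtain ⟨i0, hi0, hminw⟩ := Finset.exists_min_image S y hne
      set m := y i0 with hm
      have hm0 : 0 < m := by
        have := hi0; rw [hS, Finset.mem_filter] at this; exact this.2
      have hmin : ∀ i, 0 < y i → m ≤ y i := fun i hiy =>
        hminw i (by simp [hS, hiy])
      set y' : Fin n → ℝ := fun i => if 0 < y i then y i - m else 0 with hy'def
      have hy' : ∀ i, 0 ≤ y' i := by
        intro i; rw [hy'def]; dsimp only
        split
        · linarith [hmin i (by assumption)]
        · exact le_refl 0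
      have hsub : univ.filter (fun i => 0 < y' i) ⊆ S.erase i0 := by
        intro i hi
        rw [Finset.mem_filter] at hi
        have hpos : 0 < y' i := hi.2
        have hyi : 0 < y i := by
          by_contra hc
          rw [hy'def] at hpos
          simp only [if_neg hc] at hpos
          exact lt_irrefl 0 hpos
        refine Finset.mem_erase.mpr ⟨?_, by simp [hS, hyi]⟩
        intro hii
        rw [hii, hy'def] at hpos
        simp only [if_pos hm0] at hpos
        rw [← hm, sub_self] at hpos
        simp at hpos
      have hcard' : (univ.filter (fun i => 0 < y' i)).card ≤ N := by
        have h1 := Finset.card_le_card hsub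
        have h2 : (S.erase i0).card = S.card - 1 := Finset.card_erase_of_mem hi0
        have h3 : 0 < S.card := Finset.card_pos.mpr hne
        omega
      have hvol' : Aux.vol G (univ.filter (fun i => 0 < y' i)) ≤ Aux.vol G univ / 2 := by
        refine le_trans ?_ hvol
        apply Finset.sum_le_sum_of_subset_of_nonneg
          (hsub.trans (Finset.erase_subset _ _))
        intro i _ _
        positivity
      have hIH := ih y' hcard' hy' hvol'
      have hdecomp := Aux.energy_decomp G y m hy hmin
      have hsum : ∑ i, (G.degree i : ℝ) * y i
          = m * Aux.vol G S + ∑ i, (G.degree i : ℝ) * y' i := by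
        have step : ∀ i, (G.degree i : ℝ) * y i
            = (if i ∈ S then (G.degree i : ℝ) * m else 0) + (G.degree i : ℝ) * y' i := by
          intro i
          by_cases hi : 0 < y i
          · rw [if_pos (by simp [hS, hi]), hy'def]
            simp only [if_pos hi]
            ring
          · have hi0' : y i = 0 := le_antisymm (not_lt.mp hi) (hy i)
            rw [if_neg (by simp [hS, hi]), hy'def]
            simp only [if_neg hi]
            rw [hi0']
            ring
        rw [Finset.sum_congr rfl (fun i _ => step i), Finset.sum_add_distrib]
        congr 1
        rw [Finset.sum_ite_mem, Finset.univ_inter, Aux.vol, Finset.mul_sum]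
        exact Finset.sum_congr rfl fun i _ => mul_comm _ _
      have hcutS : h * Aux.vol G S ≤ Aux.cut G S := hH S hne hvol
      calc h * ∑ i, (G.degree i : ℝ) * y i
          = m * (h * Aux.vol G S) + h * ∑ i, (G.degree i : ℝ) * y' i := by
            rw [hsum]; ring
        _ ≤ m * Aux.cut G S + energy G y' :=
            add_le_add (mul_le_mul_of_nonneg_left hcutS hm0.le) hIH
        _ = energy G y := by rw [hdecomp, hS]

lemma Aux.delta_sum (x : Fin n → ℝ) :
    deltaPlus G x + deltaMinus G x + deltaZero G x = Aux.vol G univ := by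
  rw [deltaPlus, deltaMinus, deltaZero, Aux.vol, Finset.sum_filter, Finset.sum_filter,
    Finset.sum_filter, ← Finset.sum_add_distrib, ← Finset.sum_add_distrib]
  apply Finset.sum_congr rfl
  intro i _
  rcases lt_trichotomy (x i) 0 with hc | hc | hc
  · simp [hc, not_lt_of_gt hc, hc.ne]
  · simp [hc]
  · simp [hc, not_lt_of_gt hc, hc.ne']

lemma Aux.delta_nonneg (P : Fin n → Prop) [DecidablePred P] :
    0 ≤ ∑ i ∈ univ.filter P, (G.degree i : ℝ) :=
  Finset.sum_nonneg fun i _ => by positivity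

end

/-- Lemma 5.10: for connected `G` with `n ≥ 2`, the minimum
`m = min_{x ∈ π} I(x)` is attained by a vector of the form
`ϕ = δ⁻¹(1_{D⁺} − 1_{D⁻})` with `D⁺, D⁻` disjoint, not both empty, `δ = vol(D⁺)+vol(D⁻) > 0`. -/
theorem min_on_piSet_attained_by_normal {n : ℕ} (G : SimpleGraph (Fin n)) [DecidableRel G.Adj]
    (hconn : G.Connected) (hn : 2 ≤ n) :
    ∃ Dp Dm : Finset (Fin n), Disjoint Dp Dm ∧ (Dp.Nonempty ∨ Dm.Nonempty) ∧
      0 < (∑ i ∈ Dp, (G.degree i : ℝ)) + ∑ i ∈ Dm, (G.degree i : ℝ) ∧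
      energy G (fun i =>
        if i ∈ Dp then 1 / ((∑ i ∈ Dp, (G.degree i : ℝ)) + ∑ i ∈ Dm, (G.degree i : ℝ))
        else if i ∈ Dm then -(1 / ((∑ i ∈ Dp, (G.degree i : ℝ)) + ∑ i ∈ Dm, (G.degree i : ℝ)))
        else 0) = sInf (energy G '' piSet G) := by
  classical
  have hnn : Nonempty (Fin n) := ⟨⟨0, by omega⟩⟩
  have hdeg : ∀ v : Fin n, (0:ℝ) < (G.degree v : ℝ) := fun v => by
    exact_mod_cast Aux.degree_pos G hconn hn v
  set d : ℝ := Aux.vol G univ with hd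
  have hd0 : 0 < d := Finset.sum_pos (fun i _ => hdeg i) Finset.univ_nonempty
  have hvol_compl : ∀ S : Finset (Fin n), Aux.vol G Sᶜ = d - Aux.vol G S := by
    intro S
    have := Finset.sum_compl_add_sum S (fun i => (G.degree i : ℝ))
    rw [hd, Aux.vol, Aux.vol, Aux.vol]
    linarith
  have hvolpos : ∀ S : Finset (Fin n), S.Nonempty → 0 < Aux.vol G S := fun S hS =>
    Finset.sum_pos (fun i _ => hdeg i) hS
  -- minimizing set for the Cheeger ratio
  set F : Finset (Finset (Fin n)) :=
    univ.filter (fun S => S.Nonempty ∧ S ≠ univ) with hF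
  have hv0 : ({⟨0, by omega⟩} : Finset (Fin n)) ∈ F := by
    rw [hF, Finset.mem_filter]
    refine ⟨Finset.mem_univ _, Finset.singleton_nonempty _, ?_⟩
    intro hcontra
    have := congrArg Finset.card hcontra
    simp [Finset.card_univ] at this
    omega
  have hFne : F.Nonempty := ⟨_, hv0⟩
  set ratio : Finset (Fin n) → ℝ :=
    fun S => Aux.cut G S / min (Aux.vol G S) (Aux.vol G Sᶜ) with hratio
  set R : Finset ℝ := F.image ratio with hR
  have hRne : R.Nonempty := hFne.image _
  set h : ℝ := R.min' hRne with hh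
  -- key inequality hypothesis
  have hH : ∀ S : Finset (Fin n), S.Nonempty → Aux.vol G S ≤ Aux.vol G univ / 2 →
      h * Aux.vol G S ≤ Aux.cut G S := by
    intro S hSne hShalf
    rw [← hd] at hShalf
    have hvpos : 0 < Aux.vol G S := hvolpos S hSne
    have hSuniv : S ≠ univ := by
      intro he
      rw [he, ← hd] at hvpos hShalf
      linarith
    have hmem : ratio S ∈ R :=
      Finset.mem_image_of_mem _ (Finset.mem_filter.mpr ⟨Finset.mem_univ _, hSne, hSuniv⟩)
    have hle : h ≤ ratio S := Finset.min'_le R _ hmem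
    have hmin_eq : min (Aux.vol G S) (Aux.vol G Sᶜ) = Aux.vol G S := by
      rw [min_eq_left]
      rw [hvol_compl]
      linarith
    rw [hratio] at hle
    simp only [hmin_eq] at hle
    exact (le_div_iff₀ hvpos).mp hle
  -- an attaining set with small volume
  obtain ⟨S0, hS0F, hS0r⟩ := Finset.mem_image.mp (Finset.min'_mem R hRne)
  rw [hF, Finset.mem_filter] at hS0F
  obtain ⟨-, hS0ne, hS0u⟩ := hS0F
  have hattain : ∃ T : Finset (Fin n), T.Nonempty ∧ Aux.vol G T ≤ d / 2 ∧
      Aux.cut G T / Aux.vol G T = h := by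
    by_cases hc : Aux.vol G S0 ≤ d / 2
    · refine ⟨S0, hS0ne, hc, ?_⟩
      rw [hh, ← hS0r, hratio]
      congr 1
      rw [min_eq_left]
      rw [hvol_compl]
      linarith
    · push_neg at hc
      have hTne : S0ᶜ.Nonempty := by
        by_contra hemp
        rw [Finset.not_nonempty_iff_eq_empty] at hemp
        apply hS0u
        apply Finset.eq_univ_iff_forall.mpr
        intro v
        by_contra hv
        have : v ∈ S0ᶜ := Finset.mem_compl.mpr hv
        rw [hemp] at this
        exact absurd this (Finset.notMem_empty v)
      refine ⟨S0ᶜ, hTne, ?_, ?_⟩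
      · rw [hvol_compl]; linarith
      · rw [hh, ← hS0r, hratio]
        simp only [Aux.cut_compl, compl_compl]
        congr 1
        rw [min_eq_right (by rw [hvol_compl]; linarith : Aux.vol G S0ᶜ ≤ Aux.vol G S0)]
  obtain ⟨T, hTne, hThalf, hTr⟩ := hattain
  have hvT : 0 < Aux.vol G T := hvolpos T hTne
  have hcutT : Aux.cut G T = h * Aux.vol G T := (div_eq_iff hvT.ne').mp hTr
  set c : ℝ := 1 / Aux.vol G T with hc
  have hc0 : 0 < c := by rw [hc]; positivity
  set φ : Fin n → ℝ := fun i => if i ∈ T then c else 0 with hφ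
  have hφen : energy G φ = h := by
    rw [hφ, Aux.energy_indicator G T c hc0.le, hcutT, hc]
    field_simp
  -- φ ∈ piSet
  have hφnorm : ∑ i, (G.degree i : ℝ) * |φ i| = 1 := by
    have : ∀ i, (G.degree i : ℝ) * |φ i| = if i ∈ T then (G.degree i : ℝ) * c else 0 := by
      intro i
      rw [hφ]
      by_cases hi : i ∈ T <;> simp [hi, abs_of_pos hc0]
    rw [Finset.sum_congr rfl (fun i _ => this i), Finset.sum_ite_mem, Finset.univ_inter,
      ← Finset.sum_mul]
    rw [hc]
    field_simp [Aux.vol]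
    rfl
  have hφpi : φ ∈ piSet G := by
    refine ⟨hφnorm, ?_⟩
    have hplus : deltaPlus G φ = Aux.vol G T := by
      rw [deltaPlus, Aux.vol]
      congr 1
      ext i
      simp only [Finset.mem_filter, Finset.mem_univ, true_and, hφ]
      by_cases hi : i ∈ T <;> simp [hi, hc0]
    have hminus : deltaMinus G φ = 0 := by
      rw [deltaMinus]
      convert Finset.sum_empty
      ext i
      simp only [Finset.mem_filter, Finset.mem_univ, true_and, hφ, Finset.notMem_empty,
        iff_false]
      by_cases hi : i ∈ T <;> simp [hi] <;> linarith
    have hzero : deltaZero G φ = Aux.vol G Tᶜ := by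
      rw [deltaZero, Aux.vol]
      congr 1
      ext i
      simp only [Finset.mem_filter, Finset.mem_univ, true_and, hφ, Finset.mem_compl]
      by_cases hi : i ∈ T <;> simp [hi, hc0.ne']
    rw [hplus, hminus, hzero, sub_zero, abs_of_pos hvT, hvol_compl]
    linarith
  -- lower bound for every x in piSet
  have hlow : ∀ x ∈ piSet G, h ≤ energy G x := by
    intro x hx
    obtain ⟨hx1, hx2⟩ := hx
    have hds := Aux.delta_sum G x
    rw [← hd] at hds
    have hp0 : 0 ≤ deltaPlus G x := Aux.delta_nonneg G _
    have hm0 : 0 ≤ deltaMinus G x := Aux.delta_nonneg G _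
    have hz0 : 0 ≤ deltaZero G x := Aux.delta_nonneg G _
    obtain ⟨habs1, habs2⟩ := abs_le.mp hx2
    have hphalf : deltaPlus G x ≤ d / 2 := by linarith
    have hmhalf : deltaMinus G x ≤ d / 2 := by linarith
    have hfilp : univ.filter (fun i => 0 < max (x i) 0) = univ.filter (fun i => 0 < x i) := by
      ext i; simp [lt_max_iff]
    have hfilm : univ.filter (fun i => 0 < max (-x i) 0) = univ.filter (fun i => x i < 0) := by
      ext i; simp [lt_max_iff, neg_pos]
    have hkp := Aux.key G h hH (univ.filter (fun i => 0 < max (x i) 0)).card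
      (fun i => max (x i) 0) le_rfl (fun i => le_max_right _ _) (by
        rw [hfilp]
        show deltaPlus G x ≤ Aux.vol G univ / 2
        rw [← hd]
        exact hphalf)
    have hkm := Aux.key G h hH (univ.filter (fun i => 0 < max (-x i) 0)).card
      (fun i => max (-x i) 0) le_rfl (fun i => le_max_right _ _) (by
        rw [hfilm]
        show deltaMinus G x ≤ Aux.vol G univ / 2
        rw [← hd]
        exact hmhalf)
    have hsplit := Aux.energy_split G x
    have hone : (∑ i, (G.degree i : ℝ) * max (x i) 0) +
        (∑ i, (G.degree i : ℝ) * max (-x i) 0) = 1 := by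
      rw [← hx1, ← Finset.sum_add_distrib]
      apply Finset.sum_congr rfl
      intro i _
      rw [← max_zero_add_max_neg_zero_eq_abs_self (x i)]
      ring
    calc h = h * ((∑ i, (G.degree i : ℝ) * max (x i) 0) +
          (∑ i, (G.degree i : ℝ) * max (-x i) 0)) := by rw [hone, mul_one]
      _ = h * (∑ i, (G.degree i : ℝ) * max (x i) 0) +
          h * (∑ i, (G.degree i : ℝ) * max (-x i) 0) := by ring
      _ ≤ energy G (fun i => max (x i) 0) + energy G (fun i => max (-x i) 0) :=
          add_le_add hkp hkm
      _ = energy G x := hsplit.symm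
  -- conclusion
  have hA : BddBelow (energy G '' piSet G) := by
    refine ⟨0, ?_⟩
    rintro r ⟨x, -, rfl⟩
    exact Aux.energy_nonneg G x
  have hAne : (energy G '' piSet G).Nonempty := ⟨energy G φ, φ, hφpi, rfl⟩
  have hinf : sInf (energy G '' piSet G) = h := by
    apply le_antisymm
    · rw [← hφen]
      exact csInf_le hA ⟨φ, hφpi, rfl⟩
    · apply le_csInf hAne
      rintro r ⟨x, hxpi, rfl⟩
      exact hlow x hxpi
  refine ⟨T, ∅, Finset.disjoint_empty_right _, Or.inl hTne, ?_, ?_⟩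
  · simpa [Aux.vol] using hvT
  · have hfun : (fun i =>
        if i ∈ T then 1 / ((∑ i ∈ T, (G.degree i : ℝ)) + ∑ i ∈ (∅ : Finset (Fin n)), (G.degree i : ℝ))
        else if i ∈ (∅ : Finset (Fin n)) then
          -(1 / ((∑ i ∈ T, (G.degree i : ℝ)) + ∑ i ∈ (∅ : Finset (Fin n)), (G.degree i : ℝ)))
        else 0) = φ := by
      funext i
      rw [hφ, hc]
      simp [Aux.vol]
    rw [hfun, hφen, hinf]
end

section
/- Let D⁺, D⁻, D⁰ be pairwise disjoint subsets with D⁺ ∪ D⁻ ∪ D⁰ = V, set δ⁺ = vol(D⁺), δ⁻ = vol(D⁻), δ⁰ = vol(D⁰), and assume δ⁺ + δ⁻ > 0, d > 0 and |δ⁺ − δ⁻| ≤ δ⁰. Let ϕ = (δ⁺ + δ⁻)⁻¹(1_{D⁺} − 1_{D⁻}) and ϕ₀ = (1/d)(1,…,1). Then there is a continuous path γ : [0,1] → X with γ(0) = ϕ₀, γ(1) = ϕ, and I(γ(t)) ≤ I(ϕ) for all t ∈ [0,1]. -/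
open Finset

/-- Lemma 5.11: given a partition `V = D⁺ ∪ D⁻ ∪ D⁰` with
`δ⁺ + δ⁻ > 0`, `d > 0`, `|δ⁺ − δ⁻| ≤ δ⁰`, there is a continuous path in `X` from
`ϕ₀ = (1/d)𝟙` to `ϕ = (δ⁺+δ⁻)⁻¹(1_{D⁺} − 1_{D⁻})` along which `I ≤ I(ϕ)`. -/
theorem path_in_level_set {n : ℕ} (G : SimpleGraph (Fin n)) [DecidableRel G.Adj]
    (Dp Dm D0 : Finset (Fin n))
    (hpm : Disjoint Dp Dm) (hp0 : Disjoint Dp D0) (hm0 : Disjoint Dm D0)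
    (hcover : Dp ∪ Dm ∪ D0 = univ)
    (hδ : 0 < (∑ i ∈ Dp, (G.degree i : ℝ)) + ∑ i ∈ Dm, (G.degree i : ℝ))
    (hd : 0 < ∑ i, (G.degree i : ℝ))
    (hbal : |(∑ i ∈ Dp, (G.degree i : ℝ)) - ∑ i ∈ Dm, (G.degree i : ℝ)|
      ≤ ∑ i ∈ D0, (G.degree i : ℝ))
    (ϕ ϕ₀ : Fin n → ℝ)
    (hϕ : ϕ = fun i =>
      if i ∈ Dp then ((∑ i ∈ Dp, (G.degree i : ℝ)) + ∑ i ∈ Dm, (G.degree i : ℝ))⁻¹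
      else if i ∈ Dm then -((∑ i ∈ Dp, (G.degree i : ℝ)) + ∑ i ∈ Dm, (G.degree i : ℝ))⁻¹
      else 0)
    (hϕ₀ : ϕ₀ = fun _ => 1 / ∑ i, (G.degree i : ℝ)) :
    ∃ γ : ℝ → Fin n → ℝ, ContinuousOn γ (Set.Icc 0 1) ∧
      γ 0 = ϕ₀ ∧ γ 1 = ϕ ∧
      ∀ t ∈ Set.Icc (0 : ℝ) 1,
        (∑ i, (G.degree i : ℝ) * |γ t i| = 1) ∧ energy G (γ t) ≤ energy G ϕ := by
  classical
  set δp := ∑ i ∈ Dp, (G.degree i : ℝ) with hδpdef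
  set δm := ∑ i ∈ Dm, (G.degree i : ℝ) with hδmdef
  set δ0 := ∑ i ∈ D0, (G.degree i : ℝ) with hδ0def
  set D := ∑ i, (G.degree i : ℝ) with hDdef
  have hdeg : ∀ i : Fin n, (0:ℝ) ≤ (G.degree i : ℝ) := fun i => Nat.cast_nonneg _
  have hsne : δp + δm ≠ 0 := ne_of_gt hδ
  have hDne : D ≠ 0 := ne_of_gt hd
  set c := (δp + δm)⁻¹ with hcdef
  have hc : 0 < c := inv_pos.mpr hδ
  have h1d : (0:ℝ) < 1 / D := div_pos one_pos hd
  have hϕ₀i : ∀ i, ϕ₀ i = 1 / D := fun i => by rw [hϕ₀]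
  have hϕp : ∀ i ∈ Dp, ϕ i = c := by
    intro i hi; rw [hϕ]; simp [hi]
  have hϕm : ∀ i ∈ Dm, ϕ i = -c := by
    intro i hi
    have h1 : i ∉ Dp := Finset.disjoint_right.mp hpm hi
    rw [hϕ]; simp [hi, h1]
  have hϕz : ∀ i ∈ D0, ϕ i = 0 := by
    intro i hi
    have h1 : i ∉ Dp := Finset.disjoint_right.mp hp0 hi
    have h2 : i ∉ Dm := Finset.disjoint_right.mp hm0 hi
    rw [hϕ]; simp [h1, h2]
  have hsplit : ∀ f : Fin n → ℝ,
      ∑ i, f i = ∑ i ∈ Dp, f i + ∑ i ∈ Dm, f i + ∑ i ∈ D0, f i := by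
    intro f
    rw [← hcover, Finset.sum_union (Finset.disjoint_union_left.mpr ⟨hp0, hm0⟩),
      Finset.sum_union hpm]
  set N : ℝ → ℝ := fun t => ∑ i, (G.degree i : ℝ) * |(1 - t) * ϕ₀ i + t * ϕ i| with hNdef
  have hNt : ∀ t, N t = ∑ i, (G.degree i : ℝ) * |(1 - t) * ϕ₀ i + t * ϕ i| := fun t => rfl
  have hcs : c * (δp + δm) = 1 := inv_mul_cancel₀ hsne
  have hN0 : N 0 = 1 := by
    rw [hNt]
    have e : ∀ i ∈ (univ : Finset (Fin n)),
        (G.degree i : ℝ) * |(1 - (0:ℝ)) * ϕ₀ i + 0 * ϕ i| = (G.degree i : ℝ) * (1/D) := by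
      intro i _
      rw [hϕ₀i i]
      rw [show (1 - (0:ℝ)) * (1/D) + 0 * ϕ i = 1/D by ring, abs_of_pos h1d]
    rw [Finset.sum_congr rfl e, ← Finset.sum_mul, ← hDdef, mul_one_div, div_self hDne]
  have hN1 : N 1 = 1 := by
    rw [hNt]
    have e : ∀ i ∈ (univ : Finset (Fin n)),
        (G.degree i : ℝ) * |(1 - (1:ℝ)) * ϕ₀ i + 1 * ϕ i| = (G.degree i : ℝ) * |ϕ i| := by
      intro i _; norm_num
    rw [Finset.sum_congr rfl e, hsplit (fun i => (G.degree i : ℝ) * |ϕ i|)]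
    have e1 : ∑ i ∈ Dp, (G.degree i : ℝ) * |ϕ i| = δp * c := by
      rw [hδpdef, Finset.sum_mul]
      refine Finset.sum_congr rfl fun i hi => ?_
      rw [hϕp i hi, abs_of_pos hc]
    have e2 : ∑ i ∈ Dm, (G.degree i : ℝ) * |ϕ i| = δm * c := by
      rw [hδmdef, Finset.sum_mul]
      refine Finset.sum_congr rfl fun i hi => ?_
      rw [hϕm i hi, abs_neg, abs_of_pos hc]
    have e3 : ∑ i ∈ D0, (G.degree i : ℝ) * |ϕ i| = 0 := by
      refine Finset.sum_eq_zero fun i hi => ?_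
      rw [hϕz i hi]; simp
    rw [e1, e2, e3, add_zero]
    linear_combination hcs
  have habs : δm ≤ δp + δ0 := by
    have h := abs_le.mp hbal
    linarith [h.1]
  have hkey : ∀ t ∈ Set.Icc (0:ℝ) 1, t ≤ N t := by
    intro t ht
    have ht0 : 0 ≤ t := ht.1
    have ht1 : t ≤ 1 := ht.2
    have hp' : δp * ((1 - t) * (1/D) + t * c)
        ≤ ∑ i ∈ Dp, (G.degree i : ℝ) * |(1 - t) * ϕ₀ i + t * ϕ i| := by
      rw [hδpdef, Finset.sum_mul]
      refine Finset.sum_le_sum fun i hi => ?_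
      rw [hϕ₀i i, hϕp i hi]
      exact mul_le_mul_of_nonneg_left (le_abs_self _) (hdeg i)
    have hm' : δm * (t * c - (1 - t) * (1/D))
        ≤ ∑ i ∈ Dm, (G.degree i : ℝ) * |(1 - t) * ϕ₀ i + t * ϕ i| := by
      rw [hδmdef, Finset.sum_mul]
      refine Finset.sum_le_sum fun i hi => ?_
      rw [hϕ₀i i, hϕm i hi]
      refine mul_le_mul_of_nonneg_left ?_ (hdeg i)
      have h := neg_le_abs ((1 - t) * (1/D) + t * (-c))
      linarith
    have hz' : δ0 * ((1 - t) * (1/D))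
        ≤ ∑ i ∈ D0, (G.degree i : ℝ) * |(1 - t) * ϕ₀ i + t * ϕ i| := by
      rw [hδ0def, Finset.sum_mul]
      refine Finset.sum_le_sum fun i hi => ?_
      rw [hϕ₀i i, hϕz i hi]
      refine mul_le_mul_of_nonneg_left ?_ (hdeg i)
      have h := le_abs_self ((1 - t) * (1/D) + t * 0)
      linarith
    have harith : t + (1 - t) * (1/D) * (δp + δ0 - δm)
        = δp * ((1 - t) * (1/D) + t * c) + δm * (t * c - (1 - t) * (1/D))
          + δ0 * ((1 - t) * (1/D)) := by
      linear_combination (-t) * hcs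
    have hAnn : 0 ≤ (1 - t) * (1/D) * (δp + δ0 - δm) :=
      mul_nonneg (mul_nonneg (by linarith) h1d.le) (by linarith)
    have hfin := hsplit (fun i => (G.degree i : ℝ) * |(1 - t) * ϕ₀ i + t * ϕ i|)
    rw [hNt]
    rw [hfin]
    linarith
  have hNpos : ∀ t ∈ Set.Icc (0:ℝ) 1, 0 < N t := by
    intro t ht
    rcases eq_or_lt_of_le ht.1 with h | h
    · rw [← h, hN0]; norm_num
    · exact lt_of_lt_of_le h (hkey t ht)
  have hEnn : 0 ≤ energy G ϕ := by
    unfold energy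
    positivity
  refine ⟨fun t i => ((1 - t) * ϕ₀ i + t * ϕ i) / N t, ?_, ?_, ?_, ?_⟩
  · refine continuousOn_pi.mpr fun i => ContinuousOn.div ?_ ?_ ?_
    · exact (Continuous.continuousOn (by fun_prop))
    · refine Continuous.continuousOn ?_
      rw [hNdef]
      exact continuous_finset_sum _ fun i _ => by fun_prop
    · exact fun t ht => ne_of_gt (hNpos t ht)
  · funext i
    show ((1 - (0:ℝ)) * ϕ₀ i + 0 * ϕ i) / N 0 = ϕ₀ i
    rw [hN0]
    norm_num
  · funext i
    show ((1 - (1:ℝ)) * ϕ₀ i + 1 * ϕ i) / N 1 = ϕ i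
    rw [hN1]
    norm_num
  · intro t ht
    beta_reduce
    have hNp := hNpos t ht
    constructor
    · have e : ∀ i ∈ (univ : Finset (Fin n)),
          (G.degree i : ℝ) * |((1 - t) * ϕ₀ i + t * ϕ i) / N t|
            = ((G.degree i : ℝ) * |(1 - t) * ϕ₀ i + t * ϕ i|) / N t := by
        intro i _
        rw [abs_div, abs_of_pos hNp, mul_div_assoc]
      rw [Finset.sum_congr rfl e, ← Finset.sum_div, ← hNt, div_self (ne_of_gt hNp)]
    · have h1 : ∀ i j : Fin n,
          |((1 - t) * ϕ₀ i + t * ϕ i) / N t - ((1 - t) * ϕ₀ j + t * ϕ j) / N t|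
            = (t / N t) * |ϕ i - ϕ j| := by
        intro i j
        have h2 : ((1 - t) * ϕ₀ i + t * ϕ i) / N t - ((1 - t) * ϕ₀ j + t * ϕ j) / N t
            = (t * (ϕ i - ϕ j)) / N t := by
          rw [div_sub_div_same, hϕ₀i i, hϕ₀i j]
          congr 1
          ring
        rw [h2, abs_div, abs_mul, abs_of_nonneg ht.1, abs_of_pos hNp]
        ring
      have hEq : energy G (fun i => ((1 - t) * ϕ₀ i + t * ϕ i) / N t)
          = (t / N t) * energy G ϕ := by
        simp only [energy, h1, ← Finset.mul_sum]
        ring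
      rw [hEq]
      exact mul_le_of_le_one_left hEnn ((div_le_one hNp).mpr (hkey t ht))
end
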